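/- arXiv:2410.22994 — 2 statements merged into one kernel-verified Lean document; each statement's English description precedes it below -/
import Mathlib

section
/- Let Γ be a geometric distance-regular graph with classical parameters (D, b, α, β) such that b ≥ 2, 1 ≤ α ≤ b−1 and D ≥ 3, with line set 𝓒, and let r = [D]. Assume that for every vertex x of Γ the local graph Δ_x is the α-clique extension of the (β/α) × r grid, and that β > αr. Then: (i) for every assembly M and every vertex x at distance i from M, the number of vertices of M at distance i from x equals 1 + α[i]; (ii) for every pair of vertices x, y at distance j (1 ≤ j ≤ D), the number of assemblies containing y that are at distance j−1 from x equals [j]; and (iii) for every pair of vertices x, y at distance h (0 ≤ h ≤ D−1), the subgraph induced on B_h(x, y) = Γ_{h+1}(x) ∩ Γ(y) is the α-clique extension of the (β/α − [h]) × (r − [h]) grid. -/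
open SimpleGraph

namespace DRGPaper

variable {V : Type*}

/-- `Γ` is a distance-regular graph with diameter `D` and intersection arrays `cc`, `aa`, `bb`:
`Γ` is connected of diameter `D` and for any vertices `x, y` at distance `i ≤ D`, `y` has exactly
`cc i` neighbours at distance `i - 1` from `x`, `aa i` neighbours at distance `i` from `x`,
and `bb i` neighbours at distance `i + 1` from `x`. -/
def IsDRG [Fintype V] (G : SimpleGraph V) (D : ℕ) (cc aa bb : ℕ → ℕ) : Prop :=
  G.Connected ∧
  (∀ x y : V, G.dist x y ≤ D) ∧
  (∃ x y : V, G.dist x y = D) ∧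
  ∀ i : ℕ, i ≤ D → ∀ x y : V, G.dist x y = i →
    {z : V | G.Adj y z ∧ G.dist x z = i - 1}.ncard = cc i ∧
    {z : V | G.Adj y z ∧ G.dist x z = i}.ncard = aa i ∧
    {z : V | G.Adj y z ∧ G.dist x z = i + 1}.ncard = bb i

/-- `[j] = (b^j - 1)/(b - 1) = 1 + b + ⋯ + b^(j-1)` as a real number. -/
def gauss (b j : ℕ) : ℝ := ∑ i ∈ Finset.range j, (b : ℝ) ^ i

/-- `Γ` has classical parameters `(D, b, α, β)`: it is distance-regular of diameter `D` with
`bb i = ([D] - [i])(β - α[i])` for `0 ≤ i ≤ D - 1` and `cc i = [i](1 + α[i-1])` for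
`1 ≤ i ≤ D`. -/
def HasClassicalParams [Fintype V] (G : SimpleGraph V) (D b : ℕ) (α β : ℝ)
    (cc aa bb : ℕ → ℕ) : Prop :=
  IsDRG G D cc aa bb ∧
  (∀ i : ℕ, i ≤ D - 1 → (bb i : ℝ) = (gauss b D - gauss b i) * (β - α * gauss b i)) ∧
  (∀ i : ℕ, 1 ≤ i → i ≤ D → (cc i : ℝ) = gauss b i * (1 + α * gauss b (i - 1)))

/-- `d(x, C) = min {d(x, y) : y ∈ C}`. -/
noncomputable def distToSet (G : SimpleGraph V) (x : V) (C : Set V) : ℕ :=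
  sInf (G.dist x '' C)

/-- A maximal clique of `G`. -/
def IsMaxClique (G : SimpleGraph V) (s : Set V) : Prop :=
  G.IsClique s ∧ ∀ t : Set V, G.IsClique t → s ⊆ t → t = s

/-- The lines for the PLS(γ) property: maximal cliques with at least `γ` vertices. -/
def plsLines (G : SimpleGraph V) (γ : ℕ) : Set (Set V) :=
  {ℓ : Set V | IsMaxClique G ℓ ∧ γ ≤ ℓ.ncard}

/-- `G` is the point graph of the partial linear space with line set `L`: any two adjacent
vertices lie on exactly one common line of `L`. -/
def IsPointGraphOf (G : SimpleGraph V) (L : Set (Set V)) : Prop :=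
  ∀ x y : V, G.Adj x y → ∃! ℓ : Set V, ℓ ∈ L ∧ x ∈ ℓ ∧ y ∈ ℓ

/-- A vertex is a Delsarte vertex (w.r.t. the line set `L` and classical parameter `β`) if all
lines through it have exactly `β + 1` vertices. -/
def IsDelsarteVertex (L : Set (Set V)) (β : ℝ) (x : V) : Prop :=
  ∀ ℓ ∈ L, x ∈ ℓ → (ℓ.ncard : ℝ) = β + 1

/-- The lines for the SPLS(c, s) property: maximal cliques with at least
`a1 + 2 - (c - 1)(s - 1)` vertices. -/
def splsLines (G : SimpleGraph V) (a1 c s : ℕ) : Set (Set V) :=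
  {ℓ : Set V | IsMaxClique G ℓ ∧ (a1 : ℤ) + 2 - ((c : ℤ) - 1) * ((s : ℤ) - 1) ≤ (ℓ.ncard : ℤ)}

/-- The SPLS(c, s) property: `G` is the point graph of the partial linear space whose lines are
the maximal cliques with at least `a1 + 2 - (c-1)(s-1)` vertices, `a1 ≥ (2s-1)(c-1)`, each
vertex lies on at most `s` lines, and every point not on a line `ℓ` is collinear with at most
`c` points of `ℓ`.  SPLS(s) is the case `c = c₂`. -/
def HasSPLS (G : SimpleGraph V) (a1 c s : ℕ) : Prop :=
  1 ≤ c ∧ 2 ≤ s ∧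
  (2 * (s : ℤ) - 1) * ((c : ℤ) - 1) ≤ (a1 : ℤ) ∧
  IsPointGraphOf G (splsLines G a1 c s) ∧
  (∀ x : V, {ℓ ∈ splsLines G a1 c s | x ∈ ℓ}.ncard ≤ s) ∧
  (∀ ℓ ∈ splsLines G a1 c s, ∀ x : V, x ∉ ℓ → {y ∈ ℓ | G.Adj x y}.ncard ≤ c)

/-- `[x, y]`: the set of lines `ℓ ∈ L` through `x` such that `d(y, u) ≤ 2` for all `u ∈ ℓ`. -/
def lineXY (G : SimpleGraph V) (L : Set (Set V)) (x y : V) : Set (Set V) :=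
  {ℓ ∈ L | x ∈ ℓ ∧ ∀ u ∈ ℓ, G.dist y u ≤ 2}

/-- `𝓒` witnesses that `G` is geometric with cliques of order `q`: every member of `𝓒` is a
clique with exactly `q` vertices and every edge of `G` lies in a unique member of `𝓒`. -/
def IsGeomLineSet (G : SimpleGraph V) (q : ℝ) (𝓒 : Set (Set V)) : Prop :=
  (∀ C ∈ 𝓒, G.IsClique C ∧ (C.ncard : ℝ) = q) ∧
  ∀ x y : V, G.Adj x y → ∃! C : Set V, C ∈ 𝓒 ∧ x ∈ C ∧ y ∈ C

/-- `G` is geometric: there is a set of Delsarte cliques (cliques of the maximum order `q`)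
such that every edge lies in a unique member. -/
def IsGeometric (G : SimpleGraph V) (q : ℝ) : Prop :=
  ∃ 𝓒 : Set (Set V), IsGeomLineSet G q 𝓒

/-- An assembly: a maximal clique which is not a line. -/
def IsAssembly (G : SimpleGraph V) (𝓒 : Set (Set V)) (M : Set V) : Prop :=
  IsMaxClique G M ∧ M ∉ 𝓒

/-- The dual Pasch axiom: for every pair of adjacent vertices `x, y`, the common neighbours of
`x` and `y` outside the (any) line of `𝓒` through `x` and `y` form a clique. -/
def DualPasch (G : SimpleGraph V) (𝓒 : Set (Set V)) : Prop :=
  ∀ x y : V, G.Adj x y → ∀ ℓ ∈ 𝓒, x ∈ ℓ → y ∈ ℓ →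
    G.IsClique {z : V | G.Adj x z ∧ G.Adj y z ∧ z ∉ ℓ}

/-- The `m × n` grid, i.e. the Cartesian product `K_m □ K_n`. -/
def gridGraph (m n : ℕ) : SimpleGraph (Fin m × Fin n) :=
  (⊤ : SimpleGraph (Fin m)).boxProd (⊤ : SimpleGraph (Fin n))

/-- The `A`-clique extension of a graph `H`: replace every vertex of `H` by a clique of size
`A`, vertices in distinct cliques being adjacent exactly when the underlying vertices of `H`
are adjacent. -/
def cliqueExt {W : Type*} (H : SimpleGraph W) (A : ℕ) : SimpleGraph (W × Fin A) :=
  SimpleGraph.fromRel (fun p q => H.Adj p.1 q.1 ∨ p.1 = q.1)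

/-- `θ` is an eigenvalue of the adjacency matrix of `G`. -/
def IsAdjEigenvalue [Fintype V] (G : SimpleGraph V) [DecidableRel G.Adj] (θ : ℝ) : Prop :=
  ∃ v : V → ℝ, v ≠ 0 ∧ (G.adjMatrix ℝ).mulVec v = θ • v

/-! ### Auxiliary development for Statement 17 -/

/-- Natural-number version of `gauss`. -/
def gnat (b j : ℕ) : ℕ := ∑ i ∈ Finset.range j, b ^ i

lemma gnat_cast (b j : ℕ) : ((gnat b j : ℕ) : ℝ) = gauss b j := by
  simp [gnat, gauss]

lemma gnat_zero (b : ℕ) : gnat b 0 = 0 := by simp [gnat]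

lemma gnat_lt_gnat {b : ℕ} (hb : 1 ≤ b) {i j : ℕ} (hij : i < j) :
    gnat b i < gnat b j := by
  have h1 : Finset.range i ⊆ Finset.range j := Finset.range_subset_range.2 hij.le
  refine Finset.sum_lt_sum_of_subset h1 (Finset.mem_range.2 hij) ?_ ?_ ?_
  · simp
  · exact Nat.pow_pos hb
  · intro k _ _; exact Nat.zero_le _

lemma gnat_pos {b j : ℕ} (hb : 1 ≤ b) (hj : 1 ≤ j) : 0 < gnat b j := by
  have := gnat_lt_gnat hb (show 0 < j from hj)
  simpa [gnat_zero] using this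

/-- Adjacency in the clique extension of a grid. -/
lemma kadj {m n A : ℕ} (p q : (Fin m × Fin n) × Fin A) :
    (cliqueExt (gridGraph m n) A).Adj p q ↔ p ≠ q ∧ (p.1.1 = q.1.1 ∨ p.1.2 = q.1.2) := by
  rw [cliqueExt, SimpleGraph.fromRel_adj]
  simp only [gridGraph, SimpleGraph.boxProd_adj, SimpleGraph.top_adj]
  constructor
  · rintro ⟨h1, h2⟩
    refine ⟨h1, ?_⟩
    rcases h2 with ((⟨hne, he⟩ | ⟨hne, he⟩) | he) | ((⟨hne, he⟩ | ⟨hne, he⟩) | he)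
    · exact Or.inr he
    · exact Or.inl he
    · exact Or.inl (congrArg Prod.fst he)
    · exact Or.inr he.symm
    · exact Or.inl he.symm
    · exact Or.inl (congrArg Prod.fst he).symm
  · rintro ⟨h1, h2⟩
    refine ⟨h1, Or.inl ?_⟩
    by_cases hfst : p.1.1 = q.1.1
    · by_cases hsnd : p.1.2 = q.1.2
      · exact Or.inr (Prod.ext hfst hsnd)
      · exact Or.inl (Or.inr ⟨hsnd, hfst⟩)
    · rcases h2 with h | h
      · exact absurd h hfst
      · exact Or.inl (Or.inl ⟨hfst, h⟩)

/-- A clique in the clique extension of a grid lies within a row or a column. -/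
lemma clique_classify {m n A : ℕ} {s : Set ((Fin m × Fin n) × Fin A)}
    (hs : (cliqueExt (gridGraph m n) A).IsClique s) :
    (∀ p ∈ s, ∀ q ∈ s, p.1.1 = q.1.1) ∨ (∀ p ∈ s, ∀ q ∈ s, p.1.2 = q.1.2) := by
  by_cases hrow : ∀ p ∈ s, ∀ q ∈ s, p.1.1 = q.1.1
  · exact Or.inl hrow
  · push_neg at hrow
    obtain ⟨p, hp, q, hq, hpq⟩ := hrow
    have hpq' : p ≠ q := fun h => hpq (by rw [h])
    have hadj := hs hp hq hpq'
    rw [kadj] at hadj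
    have hsnd : p.1.2 = q.1.2 := by tauto
    right
    have key : ∀ u ∈ s, u.1.2 = p.1.2 := by
      intro u hu
      by_cases hup : u = p
      · rw [hup]
      · by_cases huq : u = q
        · rw [huq, hsnd]
        · have h1 := hs hu hp hup
          have h2 := hs hu hq huq
          rw [kadj] at h1 h2
          rcases h1.2 with h1' | h1'
          · rcases h2.2 with h2' | h2'
            · exact absurd (h1'.symm.trans h2') hpq
            · rw [h2', ← hsnd]
          · exact h1'
    intro u hu v hv
    rw [key u hu, key v hv]

/-- cardinality of “generalized subgrid” sets. -/
lemma ncard_codes {m n A : ℕ} (S : Finset (Fin m)) (T : Finset (Fin n)) :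
    {p : (Fin m × Fin n) × Fin A | p.1.1 ∈ S ∧ p.1.2 ∈ T}.ncard = S.card * T.card * A := by
  have : {p : (Fin m × Fin n) × Fin A | p.1.1 ∈ S ∧ p.1.2 ∈ T}
      = ↑((S ×ˢ T) ×ˢ (Finset.univ : Finset (Fin A))) := by
    ext p; simp [Finset.mem_product]
  rw [this, Set.ncard_coe_finset]
  simp [Finset.card_product]

lemma ncard_rowcodes {m n A : ℕ} (i : Fin m) (T : Finset (Fin n)) :
    {p : (Fin m × Fin n) × Fin A | p.1.1 = i ∧ p.1.2 ∈ T}.ncard = T.card * A := by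
  have := ncard_codes (A := A) ({i} : Finset (Fin m)) T
  simpa using this

lemma ncard_colcodes {m n A : ℕ} (S : Finset (Fin m)) (j : Fin n) :
    {p : (Fin m × Fin n) × Fin A | p.1.1 ∈ S ∧ p.1.2 = j}.ncard = S.card * A := by
  have := ncard_codes (A := A) S ({j} : Finset (Fin n))
  simpa using this

lemma ncard_rowall {m n A : ℕ} (i : Fin m) :
    {p : (Fin m × Fin n) × Fin A | p.1.1 = i}.ncard = n * A := by
  have := ncard_rowcodes (A := A) i (Finset.univ : Finset (Fin n))
  simpa using this

lemma ncard_colall {m n A : ℕ} (j : Fin n) :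
    {p : (Fin m × Fin n) × Fin A | p.1.2 = j}.ncard = m * A := by
  have := ncard_colcodes (A := A) (Finset.univ : Finset (Fin m)) j
  simpa using this

lemma ncard_biUnion_eq {α β : Type*} [Fintype β] (I : Finset α) (f : α → Set β) (k : ℕ)
    (hdisj : ∀ a ∈ I, ∀ a' ∈ I, a ≠ a' → Disjoint (f a) (f a'))
    (hcard : ∀ a ∈ I, (f a).ncard = k) : (⋃ a ∈ I, f a).ncard = I.card * k := by
  classical
  induction I using Finset.induction_on with
  | empty => simp
  | insert a I' ha ih =>
    rw [Finset.set_biUnion_insert]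
    have hdisj2 : Disjoint (f a) (⋃ a' ∈ I', f a') := by
      rw [Set.disjoint_iUnion_right]
      intro a'
      rw [Set.disjoint_iUnion_right]
      intro ha'
      exact hdisj a (Finset.mem_insert_self a I') a' (Finset.mem_insert_of_mem ha')
        (fun h => ha (h ▸ ha'))
    rw [Set.ncard_union_eq hdisj2 (Set.toFinite _) (Set.toFinite _),
      ih (fun b hb b' hb' => hdisj b (Finset.mem_insert_of_mem hb) b' (Finset.mem_insert_of_mem hb'))
        (fun b hb => hcard b (Finset.mem_insert_of_mem hb)),
      hcard a (Finset.mem_insert_self a I'), Finset.card_insert_of_notMem ha]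
    ring
section PartB
set_option linter.unusedSectionVars false

variable {V : Type*} [Fintype V] {m n A : ℕ} (G : SimpleGraph V)

/-- Decoding vertices of the local grid structure at `y` back into `V`. -/
noncomputable def decV (y : V) (e : (G.induce (G.neighborSet y)) ≃g cliqueExt (gridGraph m n) A)
    (p : (Fin m × Fin n) × Fin A) : V := ((e.symm p : G.neighborSet y) : V)

variable (y : V) (e : (G.induce (G.neighborSet y)) ≃g cliqueExt (gridGraph m n) A)

lemma decV_adj (p : (Fin m × Fin n) × Fin A) : G.Adj y (decV G y e p) :=
  (e.symm p).2

lemma decV_inj : Function.Injective (decV G y e) :=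
  Subtype.val_injective.comp e.symm.toEquiv.injective

lemma decV_code (z : V) (hz : G.Adj y z) : decV G y e (e ⟨z, hz⟩) = z := by
  simp [decV]

lemma code_decV (p : (Fin m × Fin n) × Fin A) (hp : G.Adj y (decV G y e p)) :
    e ⟨decV G y e p, hp⟩ = p := by
  have h1 : (⟨decV G y e p, hp⟩ : ↥(G.neighborSet y)) = e.symm p := Subtype.ext rfl
  rw [h1]
  exact e.apply_symm_apply p

lemma adj_decV (p q : (Fin m × Fin n) × Fin A) :
    G.Adj (decV G y e p) (decV G y e q) ↔ (cliqueExt (gridGraph m n) A).Adj p q :=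
  e.symm.map_adj_iff

/-- Rows of the local grid at `y`, as subsets of `V`. -/
noncomputable def ROW (i : Fin m) : Set V := decV G y e '' {p | p.1.1 = i}

/-- Columns of the local grid at `y`, as subsets of `V`. -/
noncomputable def COL (j : Fin n) : Set V := decV G y e '' {p | p.1.2 = j}

/-- The (candidate) assembly through `y` with row index `i`. -/
noncomputable def asmS (i : Fin m) : Set V := insert y (ROW G y e i)

/-- The (candidate) line through `y` with column index `j`. -/
noncomputable def linS (j : Fin n) : Set V := insert y (COL G y e j)

lemma ROW_adj {i : Fin m} {z : V} (hz : z ∈ ROW G y e i) : G.Adj y z := by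
  obtain ⟨p, -, rfl⟩ := hz; exact decV_adj G y e p

lemma COL_adj {j : Fin n} {z : V} (hz : z ∈ COL G y e j) : G.Adj y z := by
  obtain ⟨p, -, rfl⟩ := hz; exact decV_adj G y e p

lemma mem_ROW_iff {i : Fin m} {z : V} (hz : G.Adj y z) :
    z ∈ ROW G y e i ↔ (e ⟨z, hz⟩).1.1 = i := by
  constructor
  · rintro ⟨p, hp, hpz⟩
    have : e ⟨z, hz⟩ = p := by
      subst hpz; exact code_decV G y e p hz
    rw [this]; exact hp
  · intro h
    exact ⟨e ⟨z, hz⟩, h, decV_code G y e z hz⟩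

lemma mem_COL_iff {j : Fin n} {z : V} (hz : G.Adj y z) :
    z ∈ COL G y e j ↔ (e ⟨z, hz⟩).1.2 = j := by
  constructor
  · rintro ⟨p, hp, hpz⟩
    have : e ⟨z, hz⟩ = p := by
      subst hpz; exact code_decV G y e p hz
    rw [this]; exact hp
  · intro h
    exact ⟨e ⟨z, hz⟩, h, decV_code G y e z hz⟩

lemma y_not_mem_ROW {i : Fin m} : y ∉ ROW G y e i := by
  intro hy; exact G.irrefl (ROW_adj G y e hy)

lemma y_not_mem_COL {j : Fin n} : y ∉ COL G y e j := by
  intro hy; exact G.irrefl (COL_adj G y e hy)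

lemma ncard_ROW (i : Fin m) : (ROW G y e i).ncard = n * A := by
  rw [ROW, Set.ncard_image_of_injective _ (decV_inj G y e)]
  exact ncard_rowall i

lemma ncard_COL (j : Fin n) : (COL G y e j).ncard = m * A := by
  rw [COL, Set.ncard_image_of_injective _ (decV_inj G y e)]
  exact ncard_colall j

lemma ncard_asmS (i : Fin m) : (asmS G y e i).ncard = n * A + 1 := by
  rw [asmS, Set.ncard_insert_of_notMem (y_not_mem_ROW G y e) ((ROW G y e i).toFinite),
    ncard_ROW]

lemma ncard_linS (j : Fin n) : (linS G y e j).ncard = m * A + 1 := by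
  rw [linS, Set.ncard_insert_of_notMem (y_not_mem_COL G y e) ((COL G y e j).toFinite),
    ncard_COL]

lemma isClique_ROW (i : Fin m) : G.IsClique (ROW G y e i) := by
  rintro _ ⟨p, hp, rfl⟩ _ ⟨q, hq, rfl⟩ hne
  rw [adj_decV, kadj]
  exact ⟨fun h => hne (by rw [h]), Or.inl (by rw [hp, hq])⟩

lemma isClique_COL (j : Fin n) : G.IsClique (COL G y e j) := by
  rintro _ ⟨p, hp, rfl⟩ _ ⟨q, hq, rfl⟩ hne
  rw [adj_decV, kadj]
  exact ⟨fun h => hne (by rw [h]), Or.inr (by rw [hp, hq])⟩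

lemma isClique_asmS (i : Fin m) : G.IsClique (asmS G y e i) := by
  haveI := G.symm; rw [SimpleGraph.isClique_iff, asmS, Set.pairwise_insert_of_symm]
  exact ⟨isClique_ROW G y e i, fun z hz _ => ROW_adj G y e hz⟩

lemma isClique_linS (j : Fin n) : G.IsClique (linS G y e j) := by
  haveI := G.symm; rw [SimpleGraph.isClique_iff, linS, Set.pairwise_insert_of_symm]
  exact ⟨isClique_COL G y e j, fun z hz _ => COL_adj G y e hz⟩

lemma maxclique_asmS (hn2 : 2 ≤ n) (hA1 : 0 < A) (i : Fin m) :
    IsMaxClique G (asmS G y e i) := by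
  refine ⟨isClique_asmS G y e i, ?_⟩
  intro t ht hsub
  refine Set.Subset.antisymm ?_ hsub
  intro u hu
  by_cases huy : u = y
  · rw [huy]; exact Set.mem_insert _ _
  · have hyu : G.Adj y u := ht (hsub (Set.mem_insert _ _)) hu (fun h => huy h.symm)
    have hfst : (e ⟨u, hyu⟩).1.1 = i := by
      by_contra hne
      have key : ∀ j : Fin n, (e ⟨u, hyu⟩).1.2 = j := by
        intro j
        have hmem : decV G y e ((i, j), ⟨0, hA1⟩) ∈ ROW G y e i := ⟨((i, j), ⟨0, hA1⟩), rfl, rfl⟩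
        have hzt : decV G y e ((i, j), ⟨0, hA1⟩) ∈ t := hsub (Set.mem_insert_of_mem _ hmem)
        have huz : u ≠ decV G y e ((i, j), ⟨0, hA1⟩) := by
          intro hu'
          apply hne
          have : e ⟨u, hyu⟩ = ((i, j), ⟨0, hA1⟩) := by
            conv_lhs => rw [show (⟨u, hyu⟩ : ↥(G.neighborSet y)) =
              ⟨decV G y e ((i, j), ⟨0, hA1⟩), hu' ▸ hyu⟩ from Subtype.ext hu']
            exact code_decV G y e _ _
          rw [this]
        have hadj : G.Adj u (decV G y e ((i, j), ⟨0, hA1⟩)) := ht hu hzt huz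
        rw [← decV_code G y e u hyu, adj_decV, kadj] at hadj
        rcases hadj.2 with h | h
        · exact absurd h hne
        · exact h
      have h1 := key ⟨0, by omega⟩
      have h2 := key ⟨1, by omega⟩
      rw [h1] at h2
      simp [Fin.ext_iff] at h2
    rw [← decV_code G y e u hyu]
    exact Set.mem_insert_of_mem _ ⟨e ⟨u, hyu⟩, hfst, rfl⟩

lemma maxclique_linS (hm2 : 2 ≤ m) (hA1 : 0 < A) (j : Fin n) :
    IsMaxClique G (linS G y e j) := by
  refine ⟨isClique_linS G y e j, ?_⟩
  intro t ht hsub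
  refine Set.Subset.antisymm ?_ hsub
  intro u hu
  by_cases huy : u = y
  · rw [huy]; exact Set.mem_insert _ _
  · have hyu : G.Adj y u := ht (hsub (Set.mem_insert _ _)) hu (fun h => huy h.symm)
    have hsnd : (e ⟨u, hyu⟩).1.2 = j := by
      by_contra hne
      have key : ∀ i : Fin m, (e ⟨u, hyu⟩).1.1 = i := by
        intro i
        have hmem : decV G y e ((i, j), ⟨0, hA1⟩) ∈ COL G y e j := ⟨((i, j), ⟨0, hA1⟩), rfl, rfl⟩
        have hzt : decV G y e ((i, j), ⟨0, hA1⟩) ∈ t := hsub (Set.mem_insert_of_mem _ hmem)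
        have huz : u ≠ decV G y e ((i, j), ⟨0, hA1⟩) := by
          intro hu'
          apply hne
          have : e ⟨u, hyu⟩ = ((i, j), ⟨0, hA1⟩) := by
            conv_lhs => rw [show (⟨u, hyu⟩ : ↥(G.neighborSet y)) =
              ⟨decV G y e ((i, j), ⟨0, hA1⟩), hu' ▸ hyu⟩ from Subtype.ext hu']
            exact code_decV G y e _ _
          rw [this]
        have hadj : G.Adj u (decV G y e ((i, j), ⟨0, hA1⟩)) := ht hu hzt huz
        rw [← decV_code G y e u hyu, adj_decV, kadj] at hadj
        rcases hadj.2 with h | h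
        · exact h
        · exact absurd h hne
      have h1 := key ⟨0, by omega⟩
      have h2 := key ⟨1, by omega⟩
      rw [h1] at h2
      simp [Fin.ext_iff] at h2
    rw [← decV_code G y e u hyu]
    exact Set.mem_insert_of_mem _ ⟨e ⟨u, hyu⟩, hsnd, rfl⟩

end PartB
/-- Bundled context extracted from the hypotheses of Statement 17. -/
structure Ctx17 {V : Type*} [Fintype V] (G : SimpleGraph V) (𝓒 : Set (Set V))
    (D b m n A : ℕ) (cc bb : ℕ → ℕ) : Prop where
  conn : G.Connected
  distle : ∀ x y : V, G.dist x y ≤ D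
  count_c : ∀ i ≤ D, ∀ x y : V, G.dist x y = i →
    {z : V | G.Adj y z ∧ G.dist x z = i - 1}.ncard = cc i
  count_b : ∀ i ≤ D, ∀ x y : V, G.dist x y = i →
    {z : V | G.Adj y z ∧ G.dist x z = i + 1}.ncard = bb i
  ccval : ∀ j, 1 ≤ j → j ≤ D → cc j = gnat b j * (1 + A * gnat b (j - 1))
  bbval : ∀ i, i ≤ D - 1 → bb i = (m - gnat b i) * (n - gnat b i) * A
  hD : 3 ≤ D
  hb : 2 ≤ b
  A1 : 0 < A
  n2 : 2 ≤ n
  nm : n < m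
  glt : ∀ i, i ≤ D - 1 → gnat b i < n
  lineClique : ∀ C ∈ 𝓒, G.IsClique C
  lineCard : ∀ C ∈ 𝓒, C.ncard = m * A + 1
  uniqLine : ∀ x y : V, G.Adj x y → ∃! C, C ∈ 𝓒 ∧ x ∈ C ∧ y ∈ C

section PartC
set_option linter.unusedSectionVars false

variable {V : Type*} [Fintype V] {m n A : ℕ} {G : SimpleGraph V} {𝓒 : Set (Set V)}
  {D b : ℕ} {cc bb : ℕ → ℕ}
  (ctx : Ctx17 G 𝓒 D b m n A cc bb)
  (y : V) (e : (G.induce (G.neighborSet y)) ≃g cliqueExt (gridGraph m n) A)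

include ctx

lemma Ctx17.m2 : 2 ≤ m := lt_of_le_of_lt ctx.n2 ctx.nm |>.le

/-- Every member of `𝓒` through `y` is a `linS`. -/
lemma line_eq_linS {C : Set V} (hC : C ∈ 𝓒) (hyC : y ∈ C) :
    ∃ j, C = linS G y e j := by
  have hCc := ctx.lineClique C hC
  set pre : Set ((Fin m × Fin n) × Fin A) := {p | decV G y e p ∈ C} with hpre
  have hCd : C \ {y} = decV G y e '' pre := by
    ext z
    constructor
    · rintro ⟨hzC, hzy⟩
      have hz : G.Adj y z := hCc hyC hzC (fun h => hzy (by simp [← h]))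
      exact ⟨e ⟨z, hz⟩, by simp [hpre, decV_code G y e z hz, hzC], decV_code G y e z hz⟩
    · rintro ⟨p, hp, rfl⟩
      exact ⟨hp, by simp [(decV_adj G y e p).ne']⟩
  have hpreclique : (cliqueExt (gridGraph m n) A).IsClique pre := by
    intro p hp q hq hpq
    have := hCc hp hq (fun h => hpq (decV_inj G y e h))
    rwa [adj_decV] at this
  have hprecard : pre.ncard = m * A := by
    have h1 : (decV G y e '' pre).ncard = pre.ncard :=
      Set.ncard_image_of_injective _ (decV_inj G y e)
    have h2 : (C \ {y}).ncard = C.ncard - 1 := Set.ncard_diff_singleton_of_mem hyC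
    rw [← h1, ← hCd, h2, ctx.lineCard C hC]
    omega
  have hprene : pre.Nonempty := by
    rw [← Set.ncard_pos pre.toFinite, hprecard]
    exact Nat.mul_pos (by have := ctx.m2; omega) ctx.A1
  obtain ⟨p0, hp0⟩ := hprene
  rcases clique_classify hpreclique with hcl | hcl
  · exfalso
    have hsub : pre ⊆ {p | p.1.1 = p0.1.1} := fun p hp => hcl p hp p0 hp0
    have := Set.ncard_le_ncard hsub (Set.toFinite _)
    rw [hprecard, ncard_rowall] at this
    have : m * A ≤ n * A := this
    have h2 : n * A < m * A := Nat.mul_lt_mul_of_lt_of_le ctx.nm (le_refl A) ctx.A1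
    omega
  · refine ⟨p0.1.2, ?_⟩
    have hsub : pre ⊆ {p | p.1.2 = p0.1.2} := fun p hp => hcl p hp p0 hp0
    have hpreeq : pre = {p | p.1.2 = p0.1.2} := by
      refine Set.eq_of_subset_of_ncard_le hsub ?_ (Set.toFinite _)
      rw [hprecard, ncard_colall]
    have : C \ {y} = COL G y e p0.1.2 := by rw [hCd, hpreeq]; rfl
    rw [linS, ← this, Set.insert_diff_singleton, Set.insert_eq_self.2 hyC]

/-- Every `linS` is a member of `𝓒`. -/
lemma linS_mem (j : Fin n) : linS G y e j ∈ 𝓒 := by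
  set z := decV G y e ((⟨0, by have := ctx.m2; omega⟩, j), ⟨0, ctx.A1⟩) with hzdef
  have hz : G.Adj y z := decV_adj G y e _
  obtain ⟨C, ⟨hC, hyC, hzC⟩, -⟩ := ctx.uniqLine y z hz
  obtain ⟨j', hj'⟩ := line_eq_linS ctx y e hC hyC
  subst hj'
  have hzy : z ≠ y := hz.ne'
  have hzCOL : z ∈ COL G y e j' := by
    rcases hzC with h | h
    · exact absurd h hzy
    · exact h
  rw [mem_COL_iff G y e hz] at hzCOL
  rw [code_decV G y e _ hz] at hzCOL
  rwa [← hzCOL] at hC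

/-- Every assembly through `y` is an `asmS`. -/
lemma assembly_eq_asmS {M : Set V} (hM : IsAssembly G 𝓒 M) (hyM : y ∈ M) :
    ∃ i, M = asmS G y e i := by
  obtain ⟨⟨hMc, hMmax⟩, hMnot⟩ := hM
  set pre : Set ((Fin m × Fin n) × Fin A) := {p | decV G y e p ∈ M} with hpre
  have hCd : M \ {y} = decV G y e '' pre := by
    ext z
    constructor
    · rintro ⟨hzC, hzy⟩
      have hz : G.Adj y z := hMc hyM hzC (fun h => hzy (by simp [← h]))
      exact ⟨e ⟨z, hz⟩, by simp [hpre, decV_code G y e z hz, hzC], decV_code G y e z hz⟩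
    · rintro ⟨p, hp, rfl⟩
      exact ⟨hp, by simp [(decV_adj G y e p).ne']⟩
  have hpreclique : (cliqueExt (gridGraph m n) A).IsClique pre := by
    intro p hp q hq hpq
    have := hMc hp hq (fun h => hpq (decV_inj G y e h))
    rwa [adj_decV] at this
  by_cases hdiag : (M \ {y}).Nonempty
  case neg =>
    exfalso
    have hMy : M = {y} := by
      rw [Set.not_nonempty_iff_eq_empty, Set.diff_eq_empty] at hdiag
      exact Set.Subset.antisymm hdiag (by simpa using hyM)
    have h0 : (0 : ℕ) < m := by have := ctx.m2; omega
    have := hMmax (asmS G y e ⟨0, h0⟩) (isClique_asmS G y e _)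
      (by rw [hMy]; exact Set.singleton_subset_iff.2 (Set.mem_insert _ _))
    have hcard := ncard_asmS G y e (⟨0, h0⟩ : Fin m)
    rw [this, hMy] at hcard
    rw [Set.ncard_singleton] at hcard
    have hn2 := ctx.n2; have hA1 := ctx.A1
    have hpos : 0 < n * A := Nat.mul_pos (by omega) hA1
    omega
  obtain ⟨z0, hz0⟩ := hdiag
  have hprene : pre.Nonempty := by
    rw [hCd] at hz0
    obtain ⟨p0, hp0, -⟩ := hz0
    exact ⟨p0, hp0⟩
  obtain ⟨p0, hp0⟩ := hprene
  rcases clique_classify hpreclique with hcl | hcl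
  · refine ⟨p0.1.1, ?_⟩
    have hsub : M ⊆ asmS G y e p0.1.1 := by
      intro z hzM
      by_cases hzy : z = y
      · rw [hzy]; exact Set.mem_insert _ _
      · have hzpre : z ∈ decV G y e '' pre := by rw [← hCd]; exact ⟨hzM, hzy⟩
        obtain ⟨p, hp, rfl⟩ := hzpre
        exact Set.mem_insert_of_mem _ ⟨p, hcl p hp p0 hp0, rfl⟩
    exact (hMmax (asmS G y e p0.1.1) (isClique_asmS G y e _) hsub).symm
  · exfalso
    have hsub : M ⊆ linS G y e p0.1.2 := by
      intro z hzM
      by_cases hzy : z = y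
      · rw [hzy]; exact Set.mem_insert _ _
      · have hzpre : z ∈ decV G y e '' pre := by rw [← hCd]; exact ⟨hzM, hzy⟩
        obtain ⟨p, hp, rfl⟩ := hzpre
        exact Set.mem_insert_of_mem _ ⟨p, hcl p hp p0 hp0, rfl⟩
    have := hMmax (linS G y e p0.1.2) (isClique_linS G y e _) hsub
    rw [← this] at hMnot
    exact hMnot (linS_mem ctx y e p0.1.2)

/-- Every `asmS` is an assembly. -/
lemma asmS_assembly (i : Fin m) : IsAssembly G 𝓒 (asmS G y e i) := by
  refine ⟨maxclique_asmS G y e ctx.n2 ctx.A1 i, fun hmem => ?_⟩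
  have h1 := ctx.lineCard _ hmem
  rw [ncard_asmS] at h1
  have h2 : n * A < m * A := Nat.mul_lt_mul_of_lt_of_le ctx.nm (le_refl A) ctx.A1
  omega

lemma asmS_inj {i i' : Fin m} (h : asmS G y e i = asmS G y e i') : i = i' := by
  have h0 : (0 : ℕ) < n := by have := ctx.n2; omega
  set z := decV G y e ((i, ⟨0, h0⟩), ⟨0, ctx.A1⟩) with hzdef
  have hz : G.Adj y z := decV_adj G y e _
  have hz1 : z ∈ asmS G y e i := Set.mem_insert_of_mem _ ⟨_, rfl, rfl⟩
  rw [h] at hz1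
  rcases hz1 with h' | h'
  · exact absurd h' hz.ne'
  · rw [mem_ROW_iff G y e hz, code_decV G y e _ hz] at h'
    exact h'

end PartC
section PartD
set_option linter.unusedSectionVars false

variable {V : Type*} [Fintype V] {G : SimpleGraph V}

lemma dist_le_adj (hconn : G.Connected) {x y z : V} (hz : G.Adj y z) :
    G.dist x z ≤ G.dist x y + 1 := by
  have := hconn.dist_triangle (u := x) (v := y) (w := z)
  rwa [SimpleGraph.dist_eq_one_iff_adj.mpr hz] at this

lemma dist_ge_adj (hconn : G.Connected) {x y z : V} (hz : G.Adj y z) :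
    G.dist x y ≤ G.dist x z + 1 := by
  have := hconn.dist_triangle (u := x) (v := z) (w := y)
  rwa [SimpleGraph.dist_eq_one_iff_adj.mpr hz.symm] at this

lemma distToSet_le {x : V} {M : Set V} {z : V} (hz : z ∈ M) :
    distToSet G x M ≤ G.dist x z := Nat.sInf_le ⟨z, hz, rfl⟩

lemma exists_dist_eq_distToSet {x : V} {M : Set V} (hM : M.Nonempty) :
    ∃ z ∈ M, G.dist x z = distToSet G x M := by
  obtain ⟨z, hz, hz2⟩ := Nat.sInf_mem (hM.image (G.dist x))
  exact ⟨z, hz, hz2⟩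

lemma le_distToSet {x : V} {M : Set V} {k : ℕ} (hM : M.Nonempty)
    (h : ∀ z ∈ M, k ≤ G.dist x z) : k ≤ distToSet G x M := by
  refine le_csInf (hM.image (G.dist x)) ?_
  rintro _ ⟨z, hz, rfl⟩
  exact h z hz

lemma maxclique_nonempty [Nonempty V] {M : Set V} (hM : IsMaxClique G M) : M.Nonempty := by
  by_contra hne
  rw [Set.not_nonempty_iff_eq_empty] at hne
  have v := Classical.arbitrary V
  have := hM.2 {v} (by simp [SimpleGraph.isClique_iff, Set.pairwise_singleton]) (by simp [hne])
  simp [hne] at this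

end PartD

/-- The key inductive invariant: for `x, y` at distance `h`, the neighbours of `y` at
distance `h + 1` from `x` form a full `(m - [h]) × (n - [h])` subgrid of the local grid at
`y`, and every missing row/column contains a vertex at distance `h - 1` from `x`. -/
def Key17 {V : Type*} [Fintype V] (G : SimpleGraph V) {m n A : ℕ} (b : ℕ)
    (φ : ∀ y : V, (G.induce (G.neighborSet y)) ≃g cliqueExt (gridGraph m n) A)
    (x y : V) (h : ℕ) : Prop :=
  ∃ (S : Finset (Fin m)) (T : Finset (Fin n)),
    S.card = m - gnat b h ∧ T.card = n - gnat b h ∧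
    (∀ i : Fin m, i ∉ S → ∃ z ∈ ROW G y (φ y) i, G.dist x z = h - 1) ∧
    (∀ j : Fin n, j ∉ T → ∃ z ∈ COL G y (φ y) j, G.dist x z = h - 1) ∧
    {z : V | G.dist x z = h + 1 ∧ G.Adj y z}
      = decV G y (φ y) '' {p | p.1.1 ∈ S ∧ p.1.2 ∈ T}

section PartE
set_option linter.unusedSectionVars false

variable {V : Type*} [Fintype V] {m n A : ℕ} {G : SimpleGraph V} {𝓒 : Set (Set V)}
  {D b : ℕ} {cc bb : ℕ → ℕ}
  (ctx : Ctx17 G 𝓒 D b m n A cc bb)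
  (φ : ∀ y : V, (G.induce (G.neighborSet y)) ≃g cliqueExt (gridGraph m n) A)

include ctx

/-- Statement (i) for assemblies at distance `i ≤ D - 1`, given the key invariant at `i`. -/
lemma lemI (i : ℕ) (hi : i ≤ D - 1)
    (ki : ∀ x y : V, G.dist x y = i → Key17 G b φ x y i) :
    ∀ (M : Set V) (x : V), IsAssembly G 𝓒 M → distToSet G x M = i →
      {z | z ∈ M ∧ G.dist x z = i}.ncard = 1 + A * gnat b i := by
  intro M x hM hdts
  have : Nonempty V := ctx.conn.nonempty
  have hMne : M.Nonempty := maxclique_nonempty hM.1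
  obtain ⟨y', hy'M, hy'⟩ := exists_dist_eq_distToSet (x := x) hMne
  rw [hdts] at hy'
  obtain ⟨i₀, hMeq⟩ := assembly_eq_asmS ctx y' (φ y') hM hy'M
  subst hMeq
  obtain ⟨S, T, hScard, hTcard, hSrow, hTcol, hBeq⟩ := ki x y' hy'
  have hglt : gnat b i < n := ctx.glt i hi
  have hi₀S : i₀ ∈ S := by
    rcases Nat.eq_zero_or_pos i with h0 | h1
    · subst h0
      have : S = Finset.univ := Finset.eq_univ_of_card S (by rw [hScard, gnat_zero]; simp)
      rw [this]; exact Finset.mem_univ _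
    · by_contra hne
      obtain ⟨z, hzROW, hzdist⟩ := hSrow i₀ hne
      have hzM : z ∈ asmS G y' (φ y') i₀ := Set.mem_insert_of_mem _ hzROW
      have hle := distToSet_le (G := G) (x := x) hzM
      rw [hdts, hzdist] at hle
      omega
  have hsplit : ∀ z ∈ asmS G y' (φ y') i₀, G.dist x z = i ∨ G.dist x z = i + 1 := by
    intro z hz
    have hlb : i ≤ G.dist x z := by rw [← hdts]; exact distToSet_le hz
    have hub : G.dist x z ≤ i + 1 := by
      rcases hz with rfl | hz
      · omega
      · have := dist_le_adj ctx.conn (x := x) (ROW_adj G y' (φ y') hz)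
        omega
    omega
  have hup : {z | z ∈ asmS G y' (φ y') i₀ ∧ G.dist x z = i + 1}
      = decV G y' (φ y') '' {p | p.1.1 = i₀ ∧ p.1.2 ∈ T} := by
    have h1 : {z | z ∈ asmS G y' (φ y') i₀ ∧ G.dist x z = i + 1}
        = ROW G y' (φ y') i₀ ∩ {z : V | G.dist x z = i + 1 ∧ G.Adj y' z} := by
      ext z
      constructor
      · rintro ⟨hzM, hzd⟩
        rcases hzM with rfl | hz
        · exfalso; omega
        · exact ⟨hz, hzd, ROW_adj G y' (φ y') hz⟩
      · rintro ⟨hz, hzd, -⟩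
        exact ⟨Set.mem_insert_of_mem _ hz, hzd⟩
    have hcode : {p : (Fin m × Fin n) × Fin A | p.1.1 = i₀} ∩ {p | p.1.1 ∈ S ∧ p.1.2 ∈ T}
        = {p | p.1.1 = i₀ ∧ p.1.2 ∈ T} := by
      ext p
      constructor
      · rintro ⟨h1', h2'⟩; exact ⟨h1', h2'.2⟩
      · rintro ⟨h1', h2'⟩; exact ⟨h1', h1' ▸ hi₀S, h2'⟩
    rw [h1, hBeq, ROW, ← Set.image_inter (decV_inj G y' (φ y')), hcode]
  have hupcard : {z | z ∈ asmS G y' (φ y') i₀ ∧ G.dist x z = i + 1}.ncard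
      = (n - gnat b i) * A := by
    rw [hup, Set.ncard_image_of_injective _ (decV_inj G y' (φ y')), ncard_rowcodes, hTcard]
  have huni : {z | z ∈ asmS G y' (φ y') i₀ ∧ G.dist x z = i}
      ∪ {z | z ∈ asmS G y' (φ y') i₀ ∧ G.dist x z = i + 1} = asmS G y' (φ y') i₀ := by
    ext z
    constructor
    · rintro (⟨hz, -⟩ | ⟨hz, -⟩) <;> exact hz
    · intro hz
      rcases hsplit z hz with h' | h'
      · exact Or.inl ⟨hz, h'⟩
      · exact Or.inr ⟨hz, h'⟩
  have hdisj : Disjoint {z | z ∈ asmS G y' (φ y') i₀ ∧ G.dist x z = i}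
      {z | z ∈ asmS G y' (φ y') i₀ ∧ G.dist x z = i + 1} := by
    rw [Set.disjoint_left]
    rintro z ⟨-, h1'⟩ ⟨-, h2'⟩
    omega
  have hsum := Set.ncard_union_eq hdisj (Set.toFinite _) (Set.toFinite _)
  rw [huni, ncard_asmS, hupcard] at hsum
  have harith : (n - gnat b i) + gnat b i = n := Nat.sub_add_cancel hglt.le
  have h2 : ((n - gnat b i) + gnat b i) * A = n * A := by rw [harith]
  rw [add_mul] at h2
  have h3 : A * gnat b i = gnat b i * A := mul_comm _ _
  omega

/-- Statement (i) for lines at distance `i ≤ D - 1`, given the key invariant at `i`. -/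
lemma lemI' (i : ℕ) (hi : i ≤ D - 1)
    (ki : ∀ x y : V, G.dist x y = i → Key17 G b φ x y i) :
    ∀ (C : Set V) (x : V), C ∈ 𝓒 → distToSet G x C = i →
      {z | z ∈ C ∧ G.dist x z = i}.ncard = 1 + A * gnat b i := by
  intro C x hC hdts
  have : Nonempty V := ctx.conn.nonempty
  have hMne : C.Nonempty := by
    have := ctx.lineCard C hC
    rw [← Set.ncard_pos C.toFinite]
    have := ctx.m2; have := ctx.A1
    omega
  obtain ⟨y', hy'M, hy'⟩ := exists_dist_eq_distToSet (x := x) hMne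
  rw [hdts] at hy'
  obtain ⟨j₀, hMeq⟩ := line_eq_linS ctx y' (φ y') hC hy'M
  subst hMeq
  obtain ⟨S, T, hScard, hTcard, hSrow, hTcol, hBeq⟩ := ki x y' hy'
  have hgltn : gnat b i < n := ctx.glt i hi
  have hglt : gnat b i < m := lt_trans hgltn ctx.nm
  have hj₀T : j₀ ∈ T := by
    rcases Nat.eq_zero_or_pos i with h0 | h1
    · subst h0
      have : T = Finset.univ := Finset.eq_univ_of_card T (by rw [hTcard, gnat_zero]; simp)
      rw [this]; exact Finset.mem_univ _
    · by_contra hne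
      obtain ⟨z, hzCOL, hzdist⟩ := hTcol j₀ hne
      have hzM : z ∈ linS G y' (φ y') j₀ := Set.mem_insert_of_mem _ hzCOL
      have hle := distToSet_le (G := G) (x := x) hzM
      rw [hdts, hzdist] at hle
      omega
  have hsplit : ∀ z ∈ linS G y' (φ y') j₀, G.dist x z = i ∨ G.dist x z = i + 1 := by
    intro z hz
    have hlb : i ≤ G.dist x z := by rw [← hdts]; exact distToSet_le hz
    have hub : G.dist x z ≤ i + 1 := by
      rcases hz with rfl | hz
      · omega
      · have := dist_le_adj ctx.conn (x := x) (COL_adj G y' (φ y') hz)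
        omega
    omega
  have hup : {z | z ∈ linS G y' (φ y') j₀ ∧ G.dist x z = i + 1}
      = decV G y' (φ y') '' {p | p.1.1 ∈ S ∧ p.1.2 = j₀} := by
    have h1 : {z | z ∈ linS G y' (φ y') j₀ ∧ G.dist x z = i + 1}
        = COL G y' (φ y') j₀ ∩ {z : V | G.dist x z = i + 1 ∧ G.Adj y' z} := by
      ext z
      constructor
      · rintro ⟨hzM, hzd⟩
        rcases hzM with rfl | hz
        · exfalso; omega
        · exact ⟨hz, hzd, COL_adj G y' (φ y') hz⟩
      · rintro ⟨hz, hzd, -⟩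
        exact ⟨Set.mem_insert_of_mem _ hz, hzd⟩
    have hcode : {p : (Fin m × Fin n) × Fin A | p.1.2 = j₀} ∩ {p | p.1.1 ∈ S ∧ p.1.2 ∈ T}
        = {p | p.1.1 ∈ S ∧ p.1.2 = j₀} := by
      ext p
      constructor
      · rintro ⟨h1', h2'⟩; exact ⟨h2'.1, h1'⟩
      · rintro ⟨h1', h2'⟩; exact ⟨h2', h1', h2' ▸ hj₀T⟩
    rw [h1, hBeq, COL, ← Set.image_inter (decV_inj G y' (φ y')), hcode]
  have hupcard : {z | z ∈ linS G y' (φ y') j₀ ∧ G.dist x z = i + 1}.ncard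
      = (m - gnat b i) * A := by
    rw [hup, Set.ncard_image_of_injective _ (decV_inj G y' (φ y')), ncard_colcodes, hScard]
  have huni : {z | z ∈ linS G y' (φ y') j₀ ∧ G.dist x z = i}
      ∪ {z | z ∈ linS G y' (φ y') j₀ ∧ G.dist x z = i + 1} = linS G y' (φ y') j₀ := by
    ext z
    constructor
    · rintro (⟨hz, -⟩ | ⟨hz, -⟩) <;> exact hz
    · intro hz
      rcases hsplit z hz with h' | h'
      · exact Or.inl ⟨hz, h'⟩
      · exact Or.inr ⟨hz, h'⟩
  have hdisj : Disjoint {z | z ∈ linS G y' (φ y') j₀ ∧ G.dist x z = i}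
      {z | z ∈ linS G y' (φ y') j₀ ∧ G.dist x z = i + 1} := by
    rw [Set.disjoint_left]
    rintro z ⟨-, h1'⟩ ⟨-, h2'⟩
    omega
  have hsum := Set.ncard_union_eq hdisj (Set.toFinite _) (Set.toFinite _)
  rw [huni, ncard_linS, hupcard] at hsum
  have harith : (m - gnat b i) + gnat b i = m := Nat.sub_add_cancel hglt.le
  have h2 : ((m - gnat b i) + gnat b i) * A = m * A := by rw [harith]
  rw [add_mul] at h2
  have h3 : A * gnat b i = gnat b i * A := mul_comm _ _
  omega

end PartE
section PartF
set_option linter.unusedSectionVars false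

variable {V : Type*} [Fintype V] {m n A : ℕ} {G : SimpleGraph V} {𝓒 : Set (Set V)}
  {D b : ℕ} {cc bb : ℕ → ℕ}
  (ctx : Ctx17 G 𝓒 D b m n A cc bb)
  (φ : ∀ y : V, (G.induce (G.neighborSet y)) ≃g cliqueExt (gridGraph m n) A)

include ctx

/-- Statement (ii): counting the special assemblies and lines through `y`. -/
lemma lemII (j : ℕ) (hj1 : 1 ≤ j) (hjD : j ≤ D)
    (kim : ∀ x y : V, G.dist x y = j - 1 → Key17 G b φ x y (j - 1)) :
    ∀ x y : V, G.dist x y = j →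
      (Finset.univ.filter
        (fun i : Fin m => distToSet G x (asmS G y (φ y) i) = j - 1)).card = gnat b j ∧
      (Finset.univ.filter
        (fun jj : Fin n => distToSet G x (linS G y (φ y) jj) = j - 1)).card = gnat b j ∧
      {M : Set V | IsAssembly G 𝓒 M ∧ y ∈ M ∧ distToSet G x M = j - 1}.ncard = gnat b j := by
  intro x y hxy
  have hj1D : j - 1 ≤ D - 1 := by omega
  have hIlemma := lemI ctx φ (j - 1) hj1D kim
  have hI'lemma := lemI' ctx φ (j - 1) hj1D kim
  set Ifil := Finset.univ.filter
    (fun i : Fin m => distToSet G x (asmS G y (φ y) i) = j - 1) with hIfil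
  set Jfil := Finset.univ.filter
    (fun jj : Fin n => distToSet G x (linS G y (φ y) jj) = j - 1) with hJfil
  have hdtsA : ∀ i : Fin m, j - 1 ≤ distToSet G x (asmS G y (φ y) i) := by
    intro i
    refine le_distToSet ⟨y, Set.mem_insert _ _⟩ ?_
    intro z hz
    rcases hz with rfl | hz
    · omega
    · have := dist_ge_adj ctx.conn (x := x) (ROW_adj G y (φ y) hz)
      omega
  have hdtsL : ∀ jj : Fin n, j - 1 ≤ distToSet G x (linS G y (φ y) jj) := by
    intro jj
    refine le_distToSet ⟨y, Set.mem_insert _ _⟩ ?_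
    intro z hz
    rcases hz with rfl | hz
    · omega
    · have := dist_ge_adj ctx.conn (x := x) (COL_adj G y (φ y) hz)
      omega
  -- the µ-type set
  have hCcard : {z : V | G.Adj y z ∧ G.dist x z = j - 1}.ncard = cc j :=
    ctx.count_c j hjD x y hxy
  -- partition into assemblies
  have hcupA : {z : V | G.Adj y z ∧ G.dist x z = j - 1}
      = ⋃ i ∈ Ifil, {z | z ∈ asmS G y (φ y) i ∧ G.dist x z = j - 1} := by
    ext z
    simp only [Set.mem_setOf_eq, Set.mem_iUnion]
    constructor
    · rintro ⟨hzadj, hzd⟩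
      refine ⟨(φ y ⟨z, hzadj⟩).1.1, ?_, ?_, hzd⟩
      · rw [hIfil, Finset.mem_filter]
        refine ⟨Finset.mem_univ _, le_antisymm ?_ (hdtsA _)⟩
        have hzROW : z ∈ ROW G y (φ y) (φ y ⟨z, hzadj⟩).1.1 :=
          (mem_ROW_iff G y (φ y) hzadj).mpr rfl
        have hzasm : z ∈ asmS G y (φ y) (φ y ⟨z, hzadj⟩).1.1 := Set.mem_insert_of_mem _ hzROW
        have := distToSet_le (G := G) (x := x) hzasm
        omega
      · exact Set.mem_insert_of_mem _ ((mem_ROW_iff G y (φ y) hzadj).mpr rfl)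
    · rintro ⟨i, hiI, hzM, hzd⟩
      rcases hzM with rfl | hz
      · exfalso; omega
      · exact ⟨ROW_adj G y (φ y) hz, hzd⟩
  have hdisjA : ∀ i ∈ Ifil, ∀ i' ∈ Ifil, i ≠ i' →
      Disjoint {z | z ∈ asmS G y (φ y) i ∧ G.dist x z = j - 1}
        {z | z ∈ asmS G y (φ y) i' ∧ G.dist x z = j - 1} := by
    intro i _ i' _ hne
    rw [Set.disjoint_left]
    rintro z ⟨hz1, hzd⟩ ⟨hz2, -⟩
    have hzy : z ≠ y := by rintro rfl; omega
    have hadj : G.Adj y z := by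
      rcases hz1 with rfl | hz
      · exact absurd rfl hzy
      · exact ROW_adj G y (φ y) hz
    have h1 : z ∈ ROW G y (φ y) i := by
      rcases hz1 with rfl | hz
      · exact absurd rfl hzy
      · exact hz
    have h2 : z ∈ ROW G y (φ y) i' := by
      rcases hz2 with rfl | hz
      · exact absurd rfl hzy
      · exact hz
    rw [mem_ROW_iff G y (φ y) hadj] at h1 h2
    exact hne (h1 ▸ h2.symm ▸ rfl)
  have hcardA : ∀ i ∈ Ifil, {z | z ∈ asmS G y (φ y) i ∧ G.dist x z = j - 1}.ncard
      = 1 + A * gnat b (j - 1) := by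
    intro i hi
    rw [hIfil, Finset.mem_filter] at hi
    exact hIlemma (asmS G y (φ y) i) x (asmS_assembly ctx y (φ y) i) hi.2
  have htotA := ncard_biUnion_eq Ifil _ (1 + A * gnat b (j - 1)) hdisjA hcardA
  rw [← hcupA, hCcard, ctx.ccval j hj1 hjD] at htotA
  have hpos : 0 < 1 + A * gnat b (j - 1) := by omega
  have hIcard : Ifil.card = gnat b j :=
    (Nat.eq_of_mul_eq_mul_right hpos htotA).symm
  -- partition into lines
  have hcupL : {z : V | G.Adj y z ∧ G.dist x z = j - 1}
      = ⋃ jj ∈ Jfil, {z | z ∈ linS G y (φ y) jj ∧ G.dist x z = j - 1} := by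
    ext z
    simp only [Set.mem_setOf_eq, Set.mem_iUnion]
    constructor
    · rintro ⟨hzadj, hzd⟩
      refine ⟨(φ y ⟨z, hzadj⟩).1.2, ?_, ?_, hzd⟩
      · rw [hJfil, Finset.mem_filter]
        refine ⟨Finset.mem_univ _, le_antisymm ?_ (hdtsL _)⟩
        have hzCOL : z ∈ COL G y (φ y) (φ y ⟨z, hzadj⟩).1.2 :=
          (mem_COL_iff G y (φ y) hzadj).mpr rfl
        have hzlin : z ∈ linS G y (φ y) (φ y ⟨z, hzadj⟩).1.2 := Set.mem_insert_of_mem _ hzCOL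
        have := distToSet_le (G := G) (x := x) hzlin
        omega
      · exact Set.mem_insert_of_mem _ ((mem_COL_iff G y (φ y) hzadj).mpr rfl)
    · rintro ⟨jj, hjJ, hzM, hzd⟩
      rcases hzM with rfl | hz
      · exfalso; omega
      · exact ⟨COL_adj G y (φ y) hz, hzd⟩
  have hdisjL : ∀ jj ∈ Jfil, ∀ jj' ∈ Jfil, jj ≠ jj' →
      Disjoint {z | z ∈ linS G y (φ y) jj ∧ G.dist x z = j - 1}
        {z | z ∈ linS G y (φ y) jj' ∧ G.dist x z = j - 1} := by
    intro i _ i' _ hne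
    rw [Set.disjoint_left]
    rintro z ⟨hz1, hzd⟩ ⟨hz2, -⟩
    have hzy : z ≠ y := by rintro rfl; omega
    have hadj : G.Adj y z := by
      rcases hz1 with rfl | hz
      · exact absurd rfl hzy
      · exact COL_adj G y (φ y) hz
    have h1 : z ∈ COL G y (φ y) i := by
      rcases hz1 with rfl | hz
      · exact absurd rfl hzy
      · exact hz
    have h2 : z ∈ COL G y (φ y) i' := by
      rcases hz2 with rfl | hz
      · exact absurd rfl hzy
      · exact hz
    rw [mem_COL_iff G y (φ y) hadj] at h1 h2
    exact hne (h1 ▸ h2.symm ▸ rfl)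
  have hcardL : ∀ jj ∈ Jfil, {z | z ∈ linS G y (φ y) jj ∧ G.dist x z = j - 1}.ncard
      = 1 + A * gnat b (j - 1) := by
    intro jj hjj
    rw [hJfil, Finset.mem_filter] at hjj
    exact hI'lemma (linS G y (φ y) jj) x (linS_mem ctx y (φ y) jj) hjj.2
  have htotL := ncard_biUnion_eq Jfil _ (1 + A * gnat b (j - 1)) hdisjL hcardL
  rw [← hcupL, hCcard, ctx.ccval j hj1 hjD] at htotL
  have hJcard : Jfil.card = gnat b j :=
    (Nat.eq_of_mul_eq_mul_right hpos htotL).symm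
  refine ⟨hIcard, hJcard, ?_⟩
  -- the set of special assemblies
  have hasmeq : {M : Set V | IsAssembly G 𝓒 M ∧ y ∈ M ∧ distToSet G x M = j - 1}
      = (fun i => asmS G y (φ y) i) '' ↑Ifil := by
    ext M
    constructor
    · rintro ⟨hM, hyM, hdts⟩
      obtain ⟨i, rfl⟩ := assembly_eq_asmS ctx y (φ y) hM hyM
      refine ⟨i, ?_, rfl⟩
      rw [hIfil, Finset.mem_coe, Finset.mem_filter]
      exact ⟨Finset.mem_univ _, hdts⟩
    · rintro ⟨i, hiI, rfl⟩
      rw [hIfil, Finset.mem_coe, Finset.mem_filter] at hiI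
      exact ⟨asmS_assembly ctx y (φ y) i, Set.mem_insert _ _, hiI.2⟩
  rw [hasmeq, Set.ncard_image_of_injective _ (fun i i' h => asmS_inj ctx y (φ y) h),
    Set.ncard_coe_finset, hIcard]

end PartF
section PartG
set_option linter.unusedSectionVars false

variable {V : Type*} [Fintype V] {m n A : ℕ} {G : SimpleGraph V} {𝓒 : Set (Set V)}
  {D b : ℕ} {cc bb : ℕ → ℕ}
  (ctx : Ctx17 G 𝓒 D b m n A cc bb)
  (φ : ∀ y : V, (G.induce (G.neighborSet y)) ≃g cliqueExt (gridGraph m n) A)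

include ctx

/-- The key invariant holds at every distance `h ≤ D - 1`. -/
lemma key_all : ∀ h, h ≤ D - 1 → ∀ x y : V, G.dist x y = h → Key17 G b φ x y h := by
  intro h
  induction h with
  | zero =>
    intro _ x y hxy
    have hxy0 : x = y := ctx.conn.dist_eq_zero_iff.mp hxy
    subst hxy0
    refine ⟨Finset.univ, Finset.univ, ?_, ?_, by simp, by simp, ?_⟩
    · rw [gnat_zero]; simp
    · rw [gnat_zero]; simp
    · ext z
      simp only [Set.mem_setOf_eq]
      constructor
      · rintro ⟨hd, hadj⟩
        exact ⟨φ x ⟨z, hadj⟩, ⟨Finset.mem_univ _, Finset.mem_univ _⟩,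
          decV_code G x (φ x) z hadj⟩
      · rintro ⟨p, -, rfl⟩
        exact ⟨SimpleGraph.dist_eq_one_iff_adj.mpr (decV_adj G x (φ x) p),
          decV_adj G x (φ x) p⟩
  | succ h ih =>
    intro hle x y hxy
    have hih : ∀ x y : V, G.dist x y = h → Key17 G b φ x y h := ih (by omega)
    have hih' : ∀ x y : V, G.dist x y = h + 1 - 1 → Key17 G b φ x y (h + 1 - 1) := by
      simpa using hih
    obtain ⟨hIcard, hJcard, -⟩ := lemII ctx φ (h + 1) (by omega) (by omega) hih' x y hxy
    set Ifil := Finset.univ.filter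
      (fun i : Fin m => distToSet G x (asmS G y (φ y) i) = h + 1 - 1) with hIdef
    set Jfil := Finset.univ.filter
      (fun jj : Fin n => distToSet G x (linS G y (φ y) jj) = h + 1 - 1) with hJdef
    refine ⟨Ifilᶜ, Jfilᶜ, ?_, ?_, ?_, ?_, ?_⟩
    · rw [Finset.card_compl, hIcard, Fintype.card_fin]
    · rw [Finset.card_compl, hJcard, Fintype.card_fin]
    · intro i hi
      simp only [Finset.mem_compl, not_not] at hi
      rw [hIdef, Finset.mem_filter] at hi
      obtain ⟨w, hwM, hwd⟩ := exists_dist_eq_distToSet (x := x)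
        (⟨y, Set.mem_insert _ _⟩ : (asmS G y (φ y) i).Nonempty)
      rw [hi.2] at hwd
      have hwy : w ≠ y := by rintro rfl; omega
      have hwROW : w ∈ ROW G y (φ y) i := by
        rcases hwM with rfl | hw
        · exact absurd rfl hwy
        · exact hw
      exact ⟨w, hwROW, hwd⟩
    · intro jj hjj
      simp only [Finset.mem_compl, not_not] at hjj
      rw [hJdef, Finset.mem_filter] at hjj
      obtain ⟨w, hwM, hwd⟩ := exists_dist_eq_distToSet (x := x)
        (⟨y, Set.mem_insert _ _⟩ : (linS G y (φ y) jj).Nonempty)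
      rw [hjj.2] at hwd
      have hwy : w ≠ y := by rintro rfl; omega
      have hwCOL : w ∈ COL G y (φ y) jj := by
        rcases hwM with rfl | hw
        · exact absurd rfl hwy
        · exact hw
      exact ⟨w, hwCOL, hwd⟩
    · -- the set equality, via cardinality
      have hsub : {z : V | G.dist x z = h + 1 + 1 ∧ G.Adj y z}
          ⊆ decV G y (φ y) '' {p | p.1.1 ∈ Ifilᶜ ∧ p.1.2 ∈ Jfilᶜ} := by
        rintro z ⟨hzd, hzadj⟩
        refine ⟨φ y ⟨z, hzadj⟩, ⟨?_, ?_⟩, decV_code G y (φ y) z hzadj⟩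
        · rw [Finset.mem_compl]
          intro hmem
          rw [hIdef, Finset.mem_filter] at hmem
          obtain ⟨-, hdts⟩ := hmem
          obtain ⟨w, hwM, hwd⟩ := exists_dist_eq_distToSet (x := x)
            (⟨y, Set.mem_insert _ _⟩ : (asmS G y (φ y) (φ y ⟨z, hzadj⟩).1.1).Nonempty)
          rw [hdts] at hwd
          have hzasm : z ∈ asmS G y (φ y) (φ y ⟨z, hzadj⟩).1.1 :=
            Set.mem_insert_of_mem _ ((mem_ROW_iff G y (φ y) hzadj).mpr rfl)
          have hzw : z ≠ w := by rintro rfl; omega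
          have hadj : G.Adj w z :=
            isClique_asmS G y (φ y) _ hwM hzasm (fun hh => hzw hh.symm)
          have := dist_le_adj ctx.conn (x := x) hadj
          omega
        · rw [Finset.mem_compl]
          intro hmem
          rw [hJdef, Finset.mem_filter] at hmem
          obtain ⟨-, hdts⟩ := hmem
          obtain ⟨w, hwM, hwd⟩ := exists_dist_eq_distToSet (x := x)
            (⟨y, Set.mem_insert _ _⟩ : (linS G y (φ y) (φ y ⟨z, hzadj⟩).1.2).Nonempty)
          rw [hdts] at hwd
          have hzlin : z ∈ linS G y (φ y) (φ y ⟨z, hzadj⟩).1.2 :=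
            Set.mem_insert_of_mem _ ((mem_COL_iff G y (φ y) hzadj).mpr rfl)
          have hzw : z ≠ w := by rintro rfl; omega
          have hadj : G.Adj w z :=
            isClique_linS G y (φ y) _ hwM hzlin (fun hh => hzw hh.symm)
          have := dist_le_adj ctx.conn (x := x) hadj
          omega
      have hBcard : {z : V | G.dist x z = h + 1 + 1 ∧ G.Adj y z}.ncard = bb (h + 1) := by
        have hcb := ctx.count_b (h + 1) (by have := ctx.hD; omega) x y hxy
        have hset : {z : V | G.dist x z = h + 1 + 1 ∧ G.Adj y z}
            = {z : V | G.Adj y z ∧ G.dist x z = h + 1 + 1} := by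
          ext z; exact and_comm
        rw [hset, hcb]
      have himgcard : (decV G y (φ y) '' {p | p.1.1 ∈ Ifilᶜ ∧ p.1.2 ∈ Jfilᶜ}).ncard
          = bb (h + 1) := by
        rw [Set.ncard_image_of_injective _ (decV_inj G y (φ y)), ncard_codes,
          Finset.card_compl, hIcard, Fintype.card_fin,
          Finset.card_compl, hJcard, Fintype.card_fin, ctx.bbval (h + 1) hle]
      exact Set.eq_of_subset_of_ncard_le hsub (by rw [himgcard, hBcard]) (Set.toFinite _)

end PartG
section PartH
set_option linter.unusedSectionVars false

variable {V : Type*} [Fintype V] {m n A : ℕ} {G : SimpleGraph V} {b : ℕ}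
  (φ : ∀ y : V, (G.induce (G.neighborSet y)) ≃g cliqueExt (gridGraph m n) A)

/-- Statement (iii): the induced subgraph on `B_h(x,y)` from the key invariant. -/
lemma lemIII (x y : V) (h : ℕ) (hkey : Key17 G b φ x y h) :
    ∃ (S : Finset (Fin m)) (T : Finset (Fin n)),
      S.card = m - gnat b h ∧ T.card = n - gnat b h ∧
      Nonempty ((G.induce {z : V | G.dist x z = h + 1 ∧ G.Adj y z}) ≃g
        cliqueExt (gridGraph S.card T.card) A) := by
  classical
  obtain ⟨S, T, hScard, hTcard, -, -, hBeq⟩ := hkey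
  have hmem : ∀ z : V, ∀ hz : z ∈ {z : V | G.dist x z = h + 1 ∧ G.Adj y z},
      (φ y ⟨z, hz.2⟩).1.1 ∈ S ∧ (φ y ⟨z, hz.2⟩).1.2 ∈ T := by
    intro z hz
    have hz' := hz
    rw [hBeq] at hz'
    obtain ⟨p, hp, hpz⟩ := hz'
    have hcode : φ y ⟨z, hz.2⟩ = p := by
      subst hpz
      exact code_decV G y (φ y) p hz.2
    rw [hcode]
    exact hp
  refine ⟨S, T, hScard, hTcard, ⟨?_⟩⟩
  refine RelIso.mk (Equiv.mk
    (fun z => ((S.equivFin ⟨(φ y ⟨z.1, z.2.2⟩).1.1, (hmem z.1 z.2).1⟩,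
                T.equivFin ⟨(φ y ⟨z.1, z.2.2⟩).1.2, (hmem z.1 z.2).2⟩),
               (φ y ⟨z.1, z.2.2⟩).2))
    (fun q => ⟨decV G y (φ y)
        (((S.equivFin.symm q.1.1).1, (T.equivFin.symm q.1.2).1), q.2), by
      rw [hBeq]
      exact ⟨_, ⟨(S.equivFin.symm q.1.1).2, (T.equivFin.symm q.1.2).2⟩, rfl⟩⟩)
    ?_ ?_) ?_
  · -- left inverse
    intro z
    apply Subtype.ext
    show decV G y (φ y) _ = z.1
    rw [Equiv.symm_apply_apply, Equiv.symm_apply_apply]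
    exact decV_code G y (φ y) z.1 z.2.2
  · -- right inverse
    intro q
    have hc := code_decV G y (φ y)
      (((S.equivFin.symm q.1.1).1, (T.equivFin.symm q.1.2).1), q.2)
      (decV_adj G y (φ y) _)
    refine Prod.ext (Prod.ext ?_ ?_) ?_
    · show S.equivFin ⟨_, _⟩ = q.1.1
      rw [Equiv.apply_eq_iff_eq_symm_apply]
      exact Subtype.ext (congrArg (fun c => c.1.1) hc)
    · show T.equivFin ⟨_, _⟩ = q.1.2
      rw [Equiv.apply_eq_iff_eq_symm_apply]
      exact Subtype.ext (congrArg (fun c => c.1.2) hc)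
    · exact congrArg (fun c => c.2) hc
  · -- adjacency
    intro z w
    rw [kadj]
    constructor
    · rintro ⟨hne, hor⟩
      show G.Adj z.1 w.1
      have hadjK : (cliqueExt (gridGraph m n) A).Adj (φ y ⟨z.1, z.2.2⟩) (φ y ⟨w.1, w.2.2⟩) := by
        rw [kadj]
        refine ⟨?_, ?_⟩
        · intro hcc
          apply hne
          have hzw : z = w := Subtype.ext
            ((decV_code G y (φ y) z.1 z.2.2).symm.trans
              ((congrArg (decV G y (φ y)) hcc).trans (decV_code G y (φ y) w.1 w.2.2)))
          rw [hzw]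
        · rcases hor with h' | h'
          · exact Or.inl (Subtype.ext_iff.mp (S.equivFin.injective h'))
          · exact Or.inr (Subtype.ext_iff.mp (T.equivFin.injective h'))
      have hGadj := (adj_decV G y (φ y) _ _).mpr hadjK
      rw [decV_code G y (φ y) z.1 z.2.2, decV_code G y (φ y) w.1 w.2.2] at hGadj
      exact hGadj
    · intro hadj
      have hadj' : G.Adj (decV G y (φ y) (φ y ⟨z.1, z.2.2⟩))
          (decV G y (φ y) (φ y ⟨w.1, w.2.2⟩)) := by
        rw [decV_code G y (φ y) z.1 z.2.2, decV_code G y (φ y) w.1 w.2.2]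
        exact hadj
      rw [adj_decV, kadj] at hadj'
      obtain ⟨hne, hor⟩ := hadj'
      refine ⟨?_, ?_⟩
      · intro hF
        apply hne
        have h1 := congrArg (fun q : (Fin S.card × Fin T.card) × Fin A =>
          ((S.equivFin.symm q.1.1).1 : Fin m)) hF
        have h2 := congrArg (fun q : (Fin S.card × Fin T.card) × Fin A =>
          ((T.equivFin.symm q.1.2).1 : Fin n)) hF
        have h3 := congrArg (fun q : (Fin S.card × Fin T.card) × Fin A => q.2) hF
        simp only [Equiv.coe_fn_mk, Equiv.symm_apply_apply] at h1 h2 h3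
        exact Prod.ext (Prod.ext h1 h2) h3
      · rcases hor with h' | h'
        · exact Or.inl (congrArg S.equivFin (Subtype.ext h'))
        · exact Or.inr (congrArg T.equivFin (Subtype.ext h'))

end PartH
/-- for a geometric distance-regular graph with classical parameters
`(D, b, α, β)`, `b ≥ 2`, `1 ≤ α ≤ b - 1`, `D ≥ 3`, line set `𝓒` and `r = [D]`, whose local
graphs are all the `α`-clique extension of the `(β/α) × r` grid, and with `β > αr`:
(i) a vertex at distance `i` from an assembly `M` sees exactly `1 + α[i]` vertices of `M` at
distance `i`; (ii) for vertices `x, y` at distance `j` (`1 ≤ j ≤ D`) there are exactly `[j]`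
assemblies containing `y` at distance `j - 1` from `x`; (iii) for vertices `x, y` at distance
`h ≤ D - 1`, the subgraph induced on `B_h(x, y)` is the `α`-clique extension of the
`(β/α - [h]) × (r - [h])` grid. -/
theorem statement_17 {V : Type*} [Fintype V] (G : SimpleGraph V) (D b : ℕ) (α β : ℝ)
    (cc aa bb : ℕ → ℕ) (hb : 2 ≤ b) (hD : 3 ≤ D)
    (hα : 1 ≤ α ∧ α ≤ (b : ℝ) - 1)
    (h : HasClassicalParams G D b α β cc aa bb)
    (𝓒 : Set (Set V)) (hgeo : IsGeomLineSet G (β + 1) 𝓒)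
    (A m n : ℕ) (hA : (A : ℝ) = α) (hm : (m : ℝ) = β / α) (hn : (n : ℝ) = gauss b D)
    (hloc : ∀ x : V, Nonempty ((G.induce (G.neighborSet x)) ≃g cliqueExt (gridGraph m n) A))
    (hβα : α * gauss b D < β) :
    (∀ M : Set V, IsAssembly G 𝓒 M → ∀ x : V,
      ({y ∈ M | G.dist x y = distToSet G x M}.ncard : ℝ)
        = 1 + α * gauss b (distToSet G x M)) ∧
    (∀ x y : V, ∀ j : ℕ, 1 ≤ j → j ≤ D → G.dist x y = j →
      ({M : Set V | IsAssembly G 𝓒 M ∧ y ∈ M ∧ distToSet G x M = j - 1}.ncard : ℝ)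
        = gauss b j) ∧
    (∀ x y : V, ∀ hh : ℕ, hh ≤ D - 1 → G.dist x y = hh →
      ∃ m' n' : ℕ, (m' : ℝ) = β / α - gauss b hh ∧ (n' : ℝ) = gauss b D - gauss b hh ∧
        Nonempty ((G.induce {z : V | G.dist x z = hh + 1 ∧ G.Adj y z}) ≃g
          cliqueExt (gridGraph m' n') A)) := by
  classical
  obtain ⟨⟨hconn, hdistle, hdiam, hcount⟩, hbbR, hccR⟩ := h
  have φ : ∀ y : V, (G.induce (G.neighborSet y)) ≃g cliqueExt (gridGraph m n) A :=
    fun y => (hloc y).some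
  -- numeric groundwork
  have hαpos : (0 : ℝ) < α := by linarith [hα.1]
  have hA1 : 0 < A := by
    have h1 : (1 : ℝ) ≤ (A : ℝ) := by rw [hA]; exact hα.1
    exact_mod_cast lt_of_lt_of_le zero_lt_one h1
  have hb1 : 1 ≤ b := by omega
  have hm' : (m : ℝ) * α = β := by
    rw [eq_div_iff (ne_of_gt hαpos)] at hm
    exact hm
  have hβ' : β = (A : ℝ) * m := by rw [hA, ← hm']; ring
  have hnD : n = gnat b D := by
    have h1 : ((n : ℕ) : ℝ) = ((gnat b D : ℕ) : ℝ) := by rw [gnat_cast]; exact hn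
    exact_mod_cast h1
  have hnm : n < m := by
    have h1 : (A : ℝ) * n < (A : ℝ) * m := by
      rw [← hβ', hA]
      calc α * (n : ℝ) = α * gauss b D := by rw [hn]
        _ < β := hβα
    have h2 : (n : ℝ) < m := by
      have hA0 : (0 : ℝ) < A := by exact_mod_cast hA1
      exact lt_of_mul_lt_mul_left h1 hA0.le
    exact_mod_cast h2
  have hgnat2 : gnat b 2 = 1 + b := by
    simp [gnat, Finset.sum_range_succ]
  have hn2 : 2 ≤ n := by
    have h1 : gnat b 2 ≤ gnat b D := by
      rcases Nat.lt_or_ge 2 D with h' | h'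
      · exact (gnat_lt_gnat hb1 h').le
      · interval_cases D <;> omega
    omega
  have hglt : ∀ i, i ≤ D - 1 → gnat b i < n := by
    intro i hi
    rw [hnD]
    exact gnat_lt_gnat hb1 (by omega)
  have hccval : ∀ j, 1 ≤ j → j ≤ D → cc j = gnat b j * (1 + A * gnat b (j - 1)) := by
    intro j h1 h2
    have h3 := hccR j h1 h2
    rw [← hA, ← gnat_cast b j, ← gnat_cast b (j - 1)] at h3
    have h4 : (cc j : ℝ) = ((gnat b j * (1 + A * gnat b (j - 1)) : ℕ) : ℝ) := by
      rw [h3]; push_cast; ring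
    exact_mod_cast h4
  have hbbval : ∀ i, i ≤ D - 1 → bb i = (m - gnat b i) * (n - gnat b i) * A := by
    intro i hi
    have h1 := hbbR i hi
    have hgn : gnat b i < n := hglt i hi
    have hgm : gnat b i < m := lt_trans hgn hnm
    have h2 : (bb i : ℝ) = ((m : ℝ) - gnat b i) * ((n : ℝ) - gnat b i) * A := by
      rw [h1, ← hn, ← gnat_cast b i, ← hA, hβ']
      push_cast [hnD]
      ring
    have h3 : (bb i : ℝ) = (((m - gnat b i) * (n - gnat b i) * A : ℕ) : ℝ) := by
      rw [h2]
      push_cast [Nat.cast_sub hgm.le, Nat.cast_sub hgn.le]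
      ring
    exact_mod_cast h3
  have ctx : Ctx17 G 𝓒 D b m n A cc bb := {
    conn := hconn
    distle := hdistle
    count_c := fun i hi x y hxy => (hcount i hi x y hxy).1
    count_b := fun i hi x y hxy => (hcount i hi x y hxy).2.2
    ccval := hccval
    bbval := hbbval
    hD := hD
    hb := hb
    A1 := hA1
    n2 := hn2
    nm := hnm
    glt := hglt
    lineClique := fun C hC => (hgeo.1 C hC).1
    lineCard := fun C hC => by
      have h1 := (hgeo.1 C hC).2
      have h2 : (C.ncard : ℝ) = ((m * A + 1 : ℕ) : ℝ) := by
        rw [h1, hβ']; push_cast; ring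
      exact_mod_cast h2
    uniqLine := hgeo.2 }
  have hkey := key_all ctx φ
  refine ⟨?_, ?_, ?_⟩
  · -- statement (i)
    intro M hM x
    have : Nonempty V := hconn.nonempty
    have hMne : M.Nonempty := maxclique_nonempty hM.1
    have hiD : distToSet G x M ≤ D := by
      obtain ⟨z, hz, hzd⟩ := exists_dist_eq_distToSet (G := G) (x := x) hMne
      rw [← hzd]
      exact hdistle x z
    by_cases hiD1 : distToSet G x M ≤ D - 1
    · have hres := lemI ctx φ (distToSet G x M) hiD1 (hkey _ hiD1) M x hM rfl
      have hseteq : {y | y ∈ M ∧ G.dist x y = distToSet G x M}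
          = {z | z ∈ M ∧ G.dist x z = distToSet G x M} := rfl
      rw [hseteq, hres]
      push_cast
      rw [gnat_cast, hA]
    · have hiDeq : distToSet G x M = D := by omega
      have hall : {y | y ∈ M ∧ G.dist x y = distToSet G x M} = M := by
        ext z
        constructor
        · rintro ⟨hz, -⟩; exact hz
        · intro hz
          have h1 : D ≤ G.dist x z := by
            rw [← hiDeq]; exact distToSet_le hz
          exact ⟨hz, by rw [hiDeq]; exact le_antisymm (hdistle x z) h1⟩
      rw [hall]
      obtain ⟨y', hy'⟩ := hMne
      obtain ⟨i₀, rfl⟩ := assembly_eq_asmS ctx y' (φ y') hM hy'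
      rw [ncard_asmS, hiDeq, ← hn, ← hA]
      rw [hnD]
      push_cast [gnat_cast]
      ring
  · -- statement (ii)
    intro x y j hj1 hjD hdist
    have hkim : ∀ x y : V, G.dist x y = j - 1 → Key17 G b φ x y (j - 1) :=
      hkey (j - 1) (by omega)
    obtain ⟨-, -, hcount2⟩ := lemII ctx φ j hj1 hjD hkim x y hdist
    rw [hcount2]
    exact gnat_cast b j
  · -- statement (iii)
    intro x y hh hhD1 hdist
    obtain ⟨S, T, hScard, hTcard, hiso⟩ := lemIII φ x y hh (hkey hh hhD1 x y hdist)
    have hgn : gnat b hh < n := hglt hh hhD1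
    have hgm : gnat b hh < m := lt_trans hgn hnm
    refine ⟨S.card, T.card, ?_, ?_, hiso⟩
    · rw [hScard]
      push_cast [Nat.cast_sub hgm.le]
      rw [gnat_cast, hm]
    · rw [hTcard]
      push_cast [Nat.cast_sub hgn.le]
      rw [gnat_cast, hn]
end DRGPaper
end

section
/- Let Γ be a geometric distance-regular graph with classical parameters (D, b, α, β) such that b ≥ 2, 1 ≤ α ≤ b−1 and D ≥ 3, with line set 𝓒, and let r = [D]. Assume that for every vertex x of Γ the local graph Δ_x is the α-clique extension of the (β/α) × r grid, and that β > αr. Let M be an assembly and x a vertex at distance 2 from M; set B = Γ_2(x) ∩ M and L(B) = { ℓ ∩ B : ℓ a line with |ℓ ∩ B| ≥ 2 }. Then (B, L(B)) is a 2-(α(b+1)+1, α+1, 1) design; in particular, α + 1 divides b(b+1). -/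
open SimpleGraph

namespace DRGPaper

variable {V : Type*}

/-! ### Auxiliary machinery for statement 19 -/

section Auxiliary

open Classical in
/-- Adjacency in the `A`-clique extension of the `m × n` grid. -/
lemma extAdj_iff {m n A : ℕ} {v w : (Fin m × Fin n) × Fin A} :
    (cliqueExt (gridGraph m n) A).Adj v w ↔ v ≠ w ∧ (v.1.1 = w.1.1 ∨ v.1.2 = w.1.2) := by
  unfold cliqueExt gridGraph
  rw [SimpleGraph.fromRel_adj]
  simp only [SimpleGraph.boxProd_adj, SimpleGraph.top_adj]
  constructor
  · rintro ⟨hne, h | h⟩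
    · refine ⟨hne, ?_⟩
      rcases h with (⟨_, h2⟩ | ⟨_, h2⟩) | h
      · exact Or.inr h2
      · exact Or.inl h2
      · exact Or.inl (congrArg Prod.fst h)
    · refine ⟨hne, ?_⟩
      rcases h with (⟨_, h2⟩ | ⟨_, h2⟩) | h
      · exact Or.inr h2.symm
      · exact Or.inl h2.symm
      · exact Or.inl (congrArg Prod.fst h).symm
  · rintro ⟨hne, hij⟩
    refine ⟨hne, Or.inl ?_⟩
    by_cases hgr : v.1 = w.1
    · exact Or.inr hgr
    · left
      rcases hij with h | h
      · right; exact ⟨fun hj => hgr (Prod.ext_iff.mpr ⟨h, hj⟩), h⟩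
      · left; exact ⟨fun hi => hgr (Prod.ext_iff.mpr ⟨hi, h⟩), h⟩

lemma ncard_classI {m n A : ℕ} (i : Fin m) :
    {v : (Fin m × Fin n) × Fin A | v.1.1 = i}.ncard = n * A := by
  rw [← Nat.card_coe_set_eq]
  have e : {v : (Fin m × Fin n) × Fin A | v.1.1 = i} ≃ Fin n × Fin A :=
    { toFun := fun v => (v.1.1.2, v.1.2)
      invFun := fun x => ⟨((i, x.1), x.2), rfl⟩
      left_inv := by rintro ⟨⟨⟨i', j⟩, t⟩, h⟩; simp only [Set.mem_setOf_eq] at h; subst h; rfl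
      right_inv := by rintro ⟨j, t⟩; rfl }
  rw [Nat.card_congr e]
  simp [Nat.card_eq_fintype_card]

lemma ncard_classJ {m n A : ℕ} (j : Fin n) :
    {v : (Fin m × Fin n) × Fin A | v.1.2 = j}.ncard = m * A := by
  rw [← Nat.card_coe_set_eq]
  have e : {v : (Fin m × Fin n) × Fin A | v.1.2 = j} ≃ Fin m × Fin A :=
    { toFun := fun v => (v.1.1.1, v.1.2)
      invFun := fun x => ⟨((x.1, j), x.2), rfl⟩
      left_inv := by rintro ⟨⟨⟨i', j'⟩, t⟩, h⟩; simp only [Set.mem_setOf_eq] at h; subst h; rfl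
      right_inv := by rintro ⟨i', t⟩; rfl }
  rw [Nat.card_congr e]
  simp [Nat.card_eq_fintype_card]

lemma ncard_classIJ {m n A : ℕ} (i : Fin m) (j : Fin n) :
    {v : (Fin m × Fin n) × Fin A | v.1.1 = i ∧ v.1.2 = j}.ncard = A := by
  rw [← Nat.card_coe_set_eq]
  have e : {v : (Fin m × Fin n) × Fin A | v.1.1 = i ∧ v.1.2 = j} ≃ Fin A :=
    { toFun := fun v => v.1.2
      invFun := fun t => ⟨((i, j), t), rfl, rfl⟩
      left_inv := by rintro ⟨⟨⟨i', j'⟩, t⟩, h1, h2⟩; simp only [Set.mem_setOf_eq] at h1 h2; subst h1; subst h2; rfl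
      right_inv := by intro t; rfl }
  rw [Nat.card_congr e]
  simp [Nat.card_eq_fintype_card]

/-- A clique in the clique extension of a grid is contained in a single row or column. -/
lemma clique_coord {m n A : ℕ} {S : Set ((Fin m × Fin n) × Fin A)}
    (hS : (cliqueExt (gridGraph m n) A).IsClique S) :
    (∀ v ∈ S, ∀ w ∈ S, v.1.1 = w.1.1) ∨ (∀ v ∈ S, ∀ w ∈ S, v.1.2 = w.1.2) := by
  have key : ∀ v ∈ S, ∀ w ∈ S, v.1.1 = w.1.1 ∨ v.1.2 = w.1.2 := by
    intro v hv w hw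
    by_cases hvw : v = w
    · exact Or.inl (by rw [hvw])
    · exact (extAdj_iff.mp (hS hv hw hvw)).2
  by_cases hI : ∀ v ∈ S, ∀ w ∈ S, v.1.1 = w.1.1
  · exact Or.inl hI
  · right
    push_neg at hI
    obtain ⟨v, hv, w, hw, h1⟩ := hI
    have hj : v.1.2 = w.1.2 := (key v hv w hw).resolve_left h1
    intro c hc d hd
    by_contra h2
    by_cases hcv : c.1.2 = v.1.2
    · have hdv : d.1.2 ≠ v.1.2 := fun h => h2 (hcv.trans h.symm)
      have hdv' : d.1.1 = v.1.1 := (key d hd v hv).resolve_right hdv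
      have hdw : d.1.2 ≠ w.1.2 := fun h => hdv (h.trans hj.symm)
      have hdw' : d.1.1 = w.1.1 := (key d hd w hw).resolve_right hdw
      exact h1 (hdv'.symm.trans hdw')
    · have hcv' : c.1.1 = v.1.1 := (key c hc v hv).resolve_right hcv
      have hcw : c.1.2 ≠ w.1.2 := fun h => hcv (h.trans hj.symm)
      have hcw' : c.1.1 = w.1.1 := (key c hc w hw).resolve_right hcw
      exact h1 (hcv'.symm.trans hcw')


/-- Fiber-wise counting of a finite set. -/
lemma sum_ncard_fibers {α ι : Type*} [Fintype α] [Fintype ι] (S : Set α) (g : α → ι) :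
    ∑ i : ι, {z ∈ S | g z = i}.ncard = S.ncard := by
  classical
  have h1 : ∀ i : ι, {z ∈ S | g z = i}.ncard = (S.toFinset.filter (fun z => g z = i)).card := by
    intro i
    rw [Set.ncard_eq_toFinset_card']
    congr 1
    ext z
    simp
  rw [Set.ncard_eq_toFinset_card' S]
  simp only [h1]
  exact (Finset.card_eq_sum_card_fiberwise (fun z _ => Finset.mem_univ (g z))).symm

/-- If a sum of naturals, each at least `c`, equals `card * c`, then each is `c`. -/
lemma eq_of_sum_eq_card_mul {ι : Type*} {s : Finset ι} {f : ι → ℕ} {c : ℕ}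
    (h1 : ∀ i ∈ s, c ≤ f i) (h2 : ∑ i ∈ s, f i = s.card * c) :
    ∀ i ∈ s, f i = c := by
  classical
  intro i hi
  have h3 : f i + ∑ j ∈ s.erase i, f j = ∑ j ∈ s, f j := Finset.add_sum_erase s f hi
  have h4 : (s.erase i).card * c ≤ ∑ j ∈ s.erase i, f j := by
    calc (s.erase i).card * c = ∑ _j ∈ s.erase i, c := by rw [Finset.sum_const, smul_eq_mul]
    _ ≤ ∑ j ∈ s.erase i, f j :=
      Finset.sum_le_sum (fun j hj => h1 j (Finset.mem_of_mem_erase hj))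
  have h5 : (s.erase i).card = s.card - 1 := Finset.card_erase_of_mem hi
  have h6 : 1 ≤ s.card := Finset.card_pos.mpr ⟨i, hi⟩
  have h7 := h1 i hi
  nlinarith [Nat.sub_add_cancel h6]

end Auxiliary
section Pre
set_option linter.unusedSectionVars false

variable {V : Type*} [Fintype V] {G : SimpleGraph V} {m n A : ℕ} {p : V}

/-- The pullback of a set of extended-grid vertices to `V` along a local isomorphism at `p`. -/
noncomputable def pre (ψ : (G.induce (G.neighborSet p)) ≃g cliqueExt (gridGraph m n) A)
    (T : Set ((Fin m × Fin n) × Fin A)) : Set V :=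
  (fun v => ((ψ.symm v : G.neighborSet p) : V)) '' T

lemma pre_inj (ψ : (G.induce (G.neighborSet p)) ≃g cliqueExt (gridGraph m n) A) :
    Function.Injective (fun v => ((ψ.symm v : G.neighborSet p) : V)) :=
  Subtype.val_injective.comp ψ.symm.toEquiv.injective

lemma pre_subset (ψ : (G.induce (G.neighborSet p)) ≃g cliqueExt (gridGraph m n) A)
    (T : Set ((Fin m × Fin n) × Fin A)) : pre ψ T ⊆ G.neighborSet p := by
  rintro z ⟨v, _, rfl⟩
  exact (ψ.symm v).2

lemma mem_pre {ψ : (G.induce (G.neighborSet p)) ≃g cliqueExt (gridGraph m n) A}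
    {T : Set ((Fin m × Fin n) × Fin A)} {z : V} :
    z ∈ pre ψ T ↔ ∃ hz : z ∈ G.neighborSet p, ψ ⟨z, hz⟩ ∈ T := by
  constructor
  · rintro ⟨v, hv, rfl⟩
    refine ⟨(ψ.symm v).2, ?_⟩
    have h1 : (⟨((ψ.symm v : G.neighborSet p) : V), (ψ.symm v).2⟩ : G.neighborSet p)
        = ψ.symm v := rfl
    rw [h1]
    simpa using hv
  · rintro ⟨hz, hT⟩
    exact ⟨ψ ⟨z, hz⟩, hT, by simp⟩

lemma ncard_pre (ψ : (G.induce (G.neighborSet p)) ≃g cliqueExt (gridGraph m n) A)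
    (T : Set ((Fin m × Fin n) × Fin A)) : (pre ψ T).ncard = T.ncard :=
  Set.ncard_image_of_injective T (pre_inj ψ)

lemma pre_inter (ψ : (G.induce (G.neighborSet p)) ≃g cliqueExt (gridGraph m n) A)
    (T₁ T₂ : Set ((Fin m × Fin n) × Fin A)) :
    pre ψ (T₁ ∩ T₂) = pre ψ T₁ ∩ pre ψ T₂ :=
  Set.image_inter (pre_inj ψ)

lemma pre_univ (ψ : (G.induce (G.neighborSet p)) ≃g cliqueExt (gridGraph m n) A) :
    pre ψ Set.univ = G.neighborSet p := by
  apply Set.eq_of_subset_of_subset (pre_subset ψ _)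
  intro z hz
  exact mem_pre.mpr ⟨hz, Set.mem_univ _⟩

lemma pre_mono (ψ : (G.induce (G.neighborSet p)) ≃g cliqueExt (gridGraph m n) A)
    {T₁ T₂ : Set ((Fin m × Fin n) × Fin A)} (h : T₁ ⊆ T₂) : pre ψ T₁ ⊆ pre ψ T₂ :=
  Set.image_mono h

lemma adj_transfer (ψ : (G.induce (G.neighborSet p)) ≃g cliqueExt (gridGraph m n) A)
    {z w : V} (hz : z ∈ G.neighborSet p) (hw : w ∈ G.neighborSet p) :
    G.Adj z w ↔ (cliqueExt (gridGraph m n) A).Adj (ψ ⟨z, hz⟩) (ψ ⟨w, hw⟩) := by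
  rw [ψ.map_adj_iff]
  rfl

lemma ncard_pre_inter (ψ : (G.induce (G.neighborSet p)) ≃g cliqueExt (gridGraph m n) A)
    (T : Set ((Fin m × Fin n) × Fin A)) (W : Set V) :
    (pre ψ T ∩ W).ncard
      = (T ∩ (fun v => ((ψ.symm v : G.neighborSet p) : V)) ⁻¹' W).ncard := by
  rw [show pre ψ T ∩ W = (fun v => ((ψ.symm v : G.neighborSet p) : V)) ''
      (T ∩ (fun v => ((ψ.symm v : G.neighborSet p) : V)) ⁻¹' W) from
    (Set.image_inter_preimage _ _ _).symm]
  exact Set.ncard_image_of_injective _ (pre_inj ψ)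

lemma sum_pre_classI (ψ : (G.induce (G.neighborSet p)) ≃g cliqueExt (gridGraph m n) A)
    (W : Set V) :
    ∑ i : Fin m, (pre ψ {v | v.1.1 = i} ∩ W).ncard = (G.neighborSet p ∩ W).ncard := by
  have hW : (G.neighborSet p ∩ W).ncard
      = ((fun v => ((ψ.symm v : G.neighborSet p) : V)) ⁻¹' W).ncard := by
    calc (G.neighborSet p ∩ W).ncard = (pre ψ Set.univ ∩ W).ncard := by rw [pre_univ]
      _ = _ := by rw [ncard_pre_inter, Set.univ_inter]
  rw [hW]
  rw [← sum_ncard_fibers ((fun v => ((ψ.symm v : G.neighborSet p) : V)) ⁻¹' W)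
    (fun v => v.1.1)]
  apply Finset.sum_congr rfl
  intro i _
  rw [ncard_pre_inter]
  congr 1
  ext v
  simp only [Set.mem_inter_iff, Set.mem_setOf_eq, Set.mem_preimage]
  tauto

lemma sum_pre_classJ (ψ : (G.induce (G.neighborSet p)) ≃g cliqueExt (gridGraph m n) A)
    (W : Set V) :
    ∑ j : Fin n, (pre ψ {v | v.1.2 = j} ∩ W).ncard = (G.neighborSet p ∩ W).ncard := by
  have hW : (G.neighborSet p ∩ W).ncard
      = ((fun v => ((ψ.symm v : G.neighborSet p) : V)) ⁻¹' W).ncard := by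
    calc (G.neighborSet p ∩ W).ncard = (pre ψ Set.univ ∩ W).ncard := by rw [pre_univ]
      _ = _ := by rw [ncard_pre_inter, Set.univ_inter]
  rw [hW]
  rw [← sum_ncard_fibers ((fun v => ((ψ.symm v : G.neighborSet p) : V)) ⁻¹' W)
    (fun v => v.1.2)]
  apply Finset.sum_congr rfl
  intro j _
  rw [ncard_pre_inter]
  congr 1
  ext v
  simp only [Set.mem_inter_iff, Set.mem_setOf_eq, Set.mem_preimage]
  tauto

end Pre
section Classify
set_option linter.unusedSectionVars false
set_option maxHeartbeats 1000000

variable {V : Type*} [Fintype V] {G : SimpleGraph V} {m n A : ℕ} {𝓒 : Set (Set V)} {p : V}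

/-- Every line through `p` corresponds to a full row (`j`-class) of the local grid at `p`. -/
lemma line_class (hmn : n < m) (hA1 : 1 ≤ A)
    (hcl : ∀ C ∈ 𝓒, G.IsClique C) (hcard : ∀ C ∈ 𝓒, C.ncard = A * m + 1)
    (ψ : (G.induce (G.neighborSet p)) ≃g cliqueExt (gridGraph m n) A)
    {ℓ : Set V} (hℓ : ℓ ∈ 𝓒) (hp : p ∈ ℓ) :
    ∃ j : Fin n, ℓ = insert p (pre ψ {v | v.1.2 = j}) := by
  have hsub : ℓ \ {p} ⊆ G.neighborSet p := by
    intro z hz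
    exact hcl ℓ hℓ hp hz.1 (fun h => hz.2 h.symm)
  set T₀ : Set (G.neighborSet p) := {a | (a : V) ∈ ℓ} with hT₀def
  have hT₀ : Subtype.val '' T₀ = ℓ \ {p} := by
    ext z
    constructor
    · rintro ⟨a, ha, rfl⟩
      exact ⟨ha, fun h => G.irrefl (h ▸ a.2)⟩
    · rintro ⟨hz1, hz2⟩
      exact ⟨⟨z, hsub ⟨hz1, hz2⟩⟩, hz1, rfl⟩
  set S : Set ((Fin m × Fin n) × Fin A) := ⇑ψ '' T₀ with hSdef
  have hScard : S.ncard = A * m := by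
    have h1 : S.ncard = T₀.ncard := Set.ncard_image_of_injective _ ψ.toEquiv.injective
    have h2 : T₀.ncard = (ℓ \ {p}).ncard := by
      rw [← hT₀]; exact (Set.ncard_image_of_injective _ Subtype.val_injective).symm
    have h3 : (ℓ \ {p}).ncard = ℓ.ncard - 1 := by
      simp [Set.ncard_diff_singleton_of_mem hp]
    rw [h1, h2, h3, hcard ℓ hℓ]
    omega
  have hSclique : (cliqueExt (gridGraph m n) A).IsClique S := by
    rintro a' ⟨a, ha, rfl⟩ b' ⟨b, hb, rfl⟩ hne
    have hab : a ≠ b := fun h => hne (by rw [h])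
    have hvals : (a : V) ≠ (b : V) := fun h => hab (Subtype.ext h)
    have hadj : G.Adj (a : V) (b : V) := hcl ℓ hℓ ha hb hvals
    have := (adj_transfer ψ a.2 b.2).mp hadj
    simpa using this
  have hSne : S.Nonempty := by
    apply Set.nonempty_of_ncard_ne_zero
    rw [hScard]
    have : 0 < m := lt_of_le_of_lt (Nat.zero_le n) hmn
    positivity
  obtain ⟨s₀, hs₀⟩ := hSne
  rcases clique_coord hSclique with hI | hJ
  · exfalso
    have hSsub : S ⊆ {v | v.1.1 = s₀.1.1} := fun v hv => hI v hv s₀ hs₀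
    have hle : A * m ≤ n * A := by
      rw [← hScard, ← ncard_classI (m := m) (n := n) (A := A) s₀.1.1]
      exact Set.ncard_le_ncard hSsub (Set.toFinite _)
    rw [mul_comm A m] at hle
    have hA0 : 0 < A := hA1
    have := Nat.le_of_mul_le_mul_right hle hA0
    omega
  · refine ⟨s₀.1.2, ?_⟩
    have hSsub : S ⊆ {v | v.1.2 = s₀.1.2} := fun v hv => hJ v hv s₀ hs₀
    have hSeq : S = {v | v.1.2 = s₀.1.2} := by
      apply Set.eq_of_subset_of_ncard_le hSsub _ (Set.toFinite _)
      rw [hScard, ncard_classJ]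
      exact le_of_eq (mul_comm m A)
    have hpre : pre ψ S = ℓ \ {p} := by
      rw [hSdef]
      unfold pre
      rw [← Set.image_comp, ← hT₀]
      apply Set.image_congr
      intro a _
      simp
    rw [← hSeq, hpre, Set.insert_diff_singleton, Set.insert_eq_self.mpr hp]

/-- Each column class together with `p` is a maximal clique which is not a line. -/
lemma class_maxclique (hmn : n < m) (hA1 : 1 ≤ A) (hn2 : 2 ≤ n)
    (hcard : ∀ C ∈ 𝓒, C.ncard = A * m + 1)
    (ψ : (G.induce (G.neighborSet p)) ≃g cliqueExt (gridGraph m n) A) (i : Fin m) :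
    IsMaxClique G (insert p (pre ψ {v | v.1.1 = i})) ∧
      insert p (pre ψ {v | v.1.1 = i}) ∉ 𝓒 := by
  have hA0 : 0 < A := hA1
  set Ki := pre ψ {v | v.1.1 = i} with hKidef
  have hKinbr : Ki ⊆ G.neighborSet p := pre_subset ψ _
  have hpKi : p ∉ Ki := fun h => G.irrefl (hKinbr h)
  have hKiadj : ∀ z ∈ Ki, ∀ w ∈ Ki, z ≠ w → G.Adj z w := by
    intro z hz w hw hne
    obtain ⟨hz', hz2⟩ := mem_pre.mp hz
    obtain ⟨hw', hw2⟩ := mem_pre.mp hw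
    apply (adj_transfer ψ hz' hw').mpr
    apply extAdj_iff.mpr
    refine ⟨fun h => hne (by simpa using Subtype.ext_iff.mp (ψ.toEquiv.injective h)), ?_⟩
    exact Or.inl (hz2.trans hw2.symm)
  have hclique : G.IsClique (insert p Ki) := by
    intro a ha b hb hne
    rcases ha with rfl | ha
    · rcases hb with rfl | hb
      · exact absurd rfl hne
      · exact hKinbr hb
    · rcases hb with rfl | hb
      · exact (hKinbr ha).symm
      · exact hKiadj a ha b hb hne
  constructor
  · refine ⟨hclique, ?_⟩
    intro t ht hsub
    apply Set.Subset.antisymm _ hsub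
    intro z hz
    by_cases hzp : z = p
    · exact hzp ▸ Set.mem_insert p Ki
    · have hz' : z ∈ G.neighborSet p :=
        ht (hsub (Set.mem_insert p Ki)) hz (fun h => hzp h.symm)
      right
      rw [hKidef, mem_pre]
      refine ⟨hz', ?_⟩
      show (ψ ⟨z, hz'⟩).1.1 = i
      by_contra hvi
      have : Nontrivial (Fin n) := Fin.nontrivial_iff_two_le.mpr hn2
      obtain ⟨j', hj'⟩ := exists_ne (ψ ⟨z, hz'⟩).1.2
      set u : (Fin m × Fin n) × Fin A := ((i, j'), ⟨0, hA0⟩) with hudef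
      have huKi : ((ψ.symm u : G.neighborSet p) : V) ∈ Ki := ⟨u, rfl, rfl⟩
      have hut : ((ψ.symm u : G.neighborSet p) : V) ∈ t :=
        hsub (Set.mem_insert_of_mem p huKi)
      have hzu : z ≠ ((ψ.symm u : G.neighborSet p) : V) := by
        intro h
        apply hvi
        have h2 : (⟨z, hz'⟩ : G.neighborSet p) = ψ.symm u := Subtype.ext h
        rw [h2]
        simp [hudef]
      have hadj : G.Adj z ((ψ.symm u : G.neighborSet p) : V) := ht hz hut hzu
      have := (adj_transfer ψ hz' (ψ.symm u).2).mp hadj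
      rw [show (⟨((ψ.symm u : G.neighborSet p) : V), (ψ.symm u).2⟩ : G.neighborSet p)
          = ψ.symm u from rfl] at this
      simp only [RelIso.apply_symm_apply] at this
      rcases (extAdj_iff.mp this).2 with h | h
      · exact hvi (by simpa [hudef] using h)
      · exact hj' (by simpa [hudef] using h.symm)
  · intro hmem
    have h1 : (insert p Ki).ncard = A * m + 1 := hcard _ hmem
    have h2 : (insert p Ki).ncard = n * A + 1 := by
      rw [Set.ncard_insert_of_notMem hpKi (Set.toFinite _), hKidef, ncard_pre, ncard_classI]
    rw [h1] at h2
    have hmA : A * m = A * n := by rw [mul_comm A n]; omega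
    have : m = n := Nat.eq_of_mul_eq_mul_left hA0 hmA
    omega

end Classify
section Classify2
set_option linter.unusedSectionVars false
set_option maxHeartbeats 1000000

variable {V : Type*} [Fintype V] {G : SimpleGraph V} {m n A : ℕ} {𝓒 : Set (Set V)} {p : V}

/-- Every maximal clique through `p` which is not a line corresponds to a full column
(`i`-class) of the local grid at `p`. -/
lemma asm_class (hmn : n < m) (hA1 : 1 ≤ A)
    (hcl : ∀ C ∈ 𝓒, G.IsClique C) (hcard : ∀ C ∈ 𝓒, C.ncard = A * m + 1)
    (huniq : ∀ x y : V, G.Adj x y → ∃! C : Set V, C ∈ 𝓒 ∧ x ∈ C ∧ y ∈ C)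
    (hnb : (G.neighborSet p).Nonempty)
    (ψ : (G.induce (G.neighborSet p)) ≃g cliqueExt (gridGraph m n) A)
    {M : Set V} (hMmax : IsMaxClique G M) (hM𝓒 : M ∉ 𝓒) (hp : p ∈ M) :
    ∃ i : Fin m, M = insert p (pre ψ {v | v.1.1 = i}) := by
  have hMne : (M \ {p}).Nonempty := by
    by_contra hcon
    rw [Set.not_nonempty_iff_eq_empty, Set.diff_eq_empty] at hcon
    obtain ⟨z₀, hz₀⟩ := hnb
    have hclique : G.IsClique (insert z₀ M) := by
      intro a ha b hb hne
      rcases ha with rfl | ha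
      · rcases hb with rfl | hb
        · exact absurd rfl hne
        · rw [hcon hb]; exact hz₀.symm
      · rcases hb with rfl | hb
        · rw [hcon ha]; exact hz₀
        · exact absurd ((hcon ha).trans (hcon hb).symm) hne
    have := hMmax.2 _ hclique (Set.subset_insert z₀ M)
    have hz₀M : z₀ ∈ M := this ▸ Set.mem_insert z₀ M
    exact G.irrefl (show G.Adj p p from (hcon hz₀M) ▸ hz₀)
  have hsub : M \ {p} ⊆ G.neighborSet p := by
    intro z hz
    exact hMmax.1 hp hz.1 (fun h => hz.2 h.symm)
  set T₀ : Set (G.neighborSet p) := {a | (a : V) ∈ M} with hT₀def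
  have hT₀ : Subtype.val '' T₀ = M \ {p} := by
    ext z
    constructor
    · rintro ⟨a, ha, rfl⟩
      exact ⟨ha, fun h => G.irrefl (h ▸ a.2)⟩
    · rintro ⟨hz1, hz2⟩
      exact ⟨⟨z, hsub ⟨hz1, hz2⟩⟩, hz1, rfl⟩
  set S : Set ((Fin m × Fin n) × Fin A) := ⇑ψ '' T₀ with hSdef
  have hSclique : (cliqueExt (gridGraph m n) A).IsClique S := by
    rintro a' ⟨a, ha, rfl⟩ b' ⟨b, hb, rfl⟩ hne
    have hab : a ≠ b := fun h => hne (by rw [h])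
    have hvals : (a : V) ≠ (b : V) := fun h => hab (Subtype.ext h)
    have hadj : G.Adj (a : V) (b : V) := hMmax.1 ha hb hvals
    have := (adj_transfer ψ a.2 b.2).mp hadj
    simpa using this
  have hSne : S.Nonempty := by
    obtain ⟨z, hz⟩ := hMne
    exact ⟨ψ ⟨z, hsub hz⟩, ⟨z, hsub hz⟩, hz.1, rfl⟩
  obtain ⟨s₀, hs₀⟩ := hSne
  have hclo : ∀ z' : V, ∀ hz' : z' ∈ G.neighborSet p,
      (∀ w ∈ M \ {p}, w ≠ z' → G.Adj z' w) → z' ∈ M := by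
    intro z' hz' hall
    have hclique : G.IsClique (insert z' M) := by
      intro a ha b hb hne
      rcases ha with rfl | ha
      · rcases hb with rfl | hb
        · exact absurd rfl hne
        · by_cases hbp : b = p
          · exact hbp ▸ hz'.symm
          · exact hall b ⟨hb, hbp⟩ (fun h => hne h.symm)
      · rcases hb with rfl | hb
        · by_cases hap : a = p
          · exact hap ▸ hz'
          · exact (hall a ⟨ha, hap⟩ hne).symm
        · exact hMmax.1 ha hb hne
    have := hMmax.2 _ hclique (Set.subset_insert z' M)
    exact this ▸ Set.mem_insert z' M
  -- the two coordinate cases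
  rcases clique_coord hSclique with hI | hJ
  · -- column case : the desired conclusion
    refine ⟨s₀.1.1, ?_⟩
    have hSsub : S ⊆ {v | v.1.1 = s₀.1.1} := fun v hv => hI v hv s₀ hs₀
    have hSeq : S = {v | v.1.1 = s₀.1.1} := by
      apply Set.Subset.antisymm hSsub
      intro v hv
      have hz' := (ψ.symm v).2
      have hall : ∀ w ∈ M \ {p}, w ≠ ((ψ.symm v : G.neighborSet p) : V) →
          G.Adj ((ψ.symm v : G.neighborSet p) : V) w := by
        intro w hw hne
        have hwS : ψ ⟨w, hsub hw⟩ ∈ S := ⟨⟨w, hsub hw⟩, hw.1, rfl⟩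
        have hcoord : (ψ ⟨w, hsub hw⟩).1.1 = s₀.1.1 := hSsub hwS
        have hne2 : v ≠ ψ ⟨w, hsub hw⟩ := by
          intro h
          apply hne
          have := congrArg (fun y => ((ψ.symm y : G.neighborSet p) : V)) h
          simpa using this.symm
        have hadj : (cliqueExt (gridGraph m n) A).Adj v (ψ ⟨w, hsub hw⟩) :=
          extAdj_iff.mpr ⟨hne2, Or.inl (hv.trans hcoord.symm)⟩
        have := (adj_transfer ψ (ψ.symm v).2 (hsub hw)).mpr
          (by simpa [RelIso.apply_symm_apply] using hadj)
        exact this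
      have hz'M : ((ψ.symm v : G.neighborSet p) : V) ∈ M := hclo _ (ψ.symm v).2 hall
      have : (⟨((ψ.symm v : G.neighborSet p) : V), (ψ.symm v).2⟩ : G.neighborSet p) ∈ T₀ :=
        hz'M
      refine ⟨ψ.symm v, this, by simp⟩
    have hpre : pre ψ S = M \ {p} := by
      rw [hSdef]
      unfold pre
      rw [← Set.image_comp, ← hT₀]
      apply Set.image_congr
      intro a _
      simp
    rw [← hSeq, hpre, Set.insert_diff_singleton, Set.insert_eq_self.mpr hp]
  · -- row case : contradiction, M would be a line
    exfalso
    have hSsub : S ⊆ {v | v.1.2 = s₀.1.2} := fun v hv => hJ v hv s₀ hs₀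
    have hSeq : S = {v | v.1.2 = s₀.1.2} := by
      apply Set.Subset.antisymm hSsub
      intro v hv
      have hall : ∀ w ∈ M \ {p}, w ≠ ((ψ.symm v : G.neighborSet p) : V) →
          G.Adj ((ψ.symm v : G.neighborSet p) : V) w := by
        intro w hw hne
        have hwS : ψ ⟨w, hsub hw⟩ ∈ S := ⟨⟨w, hsub hw⟩, hw.1, rfl⟩
        have hcoord : (ψ ⟨w, hsub hw⟩).1.2 = s₀.1.2 := hSsub hwS
        have hne2 : v ≠ ψ ⟨w, hsub hw⟩ := by
          intro h
          apply hne
          have := congrArg (fun y => ((ψ.symm y : G.neighborSet p) : V)) h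
          simpa using this.symm
        have hadj : (cliqueExt (gridGraph m n) A).Adj v (ψ ⟨w, hsub hw⟩) :=
          extAdj_iff.mpr ⟨hne2, Or.inr (hv.trans hcoord.symm)⟩
        exact (adj_transfer ψ (ψ.symm v).2 (hsub hw)).mpr
          (by simpa [RelIso.apply_symm_apply] using hadj)
      have hz'M : ((ψ.symm v : G.neighborSet p) : V) ∈ M := hclo _ (ψ.symm v).2 hall
      have : (⟨((ψ.symm v : G.neighborSet p) : V), (ψ.symm v).2⟩ : G.neighborSet p) ∈ T₀ :=
        hz'M
      refine ⟨ψ.symm v, this, by simp⟩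
    have hpre : pre ψ S = M \ {p} := by
      rw [hSdef]
      unfold pre
      rw [← Set.image_comp, ← hT₀]
      apply Set.image_congr
      intro a _
      simp
    have hMeq : M = insert p (pre ψ {v | v.1.2 = s₀.1.2}) := by
      rw [← hSeq, hpre, Set.insert_diff_singleton, Set.insert_eq_self.mpr hp]
    obtain ⟨z₁, hz₁⟩ := hMne
    have hadj : G.Adj p z₁ := hsub hz₁
    obtain ⟨C, ⟨hC𝓒, hpC, hz₁C⟩, -⟩ := huniq p z₁ hadj
    obtain ⟨j₁, hCeq⟩ := line_class hmn hA1 hcl hcard ψ hC𝓒 hpC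
    have hz₁Cmem : z₁ ∈ pre ψ {v | v.1.2 = j₁} := by
      rcases hCeq ▸ hz₁C with h | h
      · exact absurd h hz₁.2
      · exact h
    have hz₁M : z₁ ∈ pre ψ {v | v.1.2 = s₀.1.2} := by
      rcases hMeq ▸ hz₁.1 with h | h
      · exact absurd h hz₁.2
      · exact h
    obtain ⟨h1, h2⟩ := mem_pre.mp hz₁Cmem
    obtain ⟨h3, h4⟩ := mem_pre.mp hz₁M
    have h2' : (ψ ⟨z₁, h1⟩).1.2 = j₁ := h2
    have h4' : (ψ ⟨z₁, h3⟩).1.2 = s₀.1.2 := h4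
    have hjj : j₁ = s₀.1.2 := h2'.symm.trans h4'
    rw [hjj] at hCeq
    have hCM : C = M := hCeq.trans hMeq.symm
    exact hM𝓒 (hCM ▸ hC𝓒)

end Classify2
section ExtCount
set_option linter.unusedSectionVars false
set_option maxHeartbeats 1000000

variable {V : Type*} [Fintype V] {G : SimpleGraph V} {m n A : ℕ} {𝓒 : Set (Set V)}

/-- A vertex adjacent to a line but not on it has exactly `A + 1` neighbours on it. -/
lemma line_ext_count (hmn : n < m) (hA1 : 1 ≤ A)
    (hcl : ∀ C ∈ 𝓒, G.IsClique C) (hcard : ∀ C ∈ 𝓒, C.ncard = A * m + 1)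
    (hloc : ∀ x : V, Nonempty ((G.induce (G.neighborSet x)) ≃g cliqueExt (gridGraph m n) A))
    {ℓ : Set V} (hℓ : ℓ ∈ 𝓒) {w x' : V} (hw : w ∈ ℓ) (hx' : x' ∉ ℓ) (hadj : G.Adj x' w) :
    (ℓ ∩ {z | G.Adj x' z}).ncard = A + 1 := by
  obtain ⟨ψ⟩ := hloc w
  obtain ⟨j₀, hℓeq⟩ := line_class hmn hA1 hcl hcard ψ hℓ hw
  have hx'nb : x' ∈ G.neighborSet w := hadj.symm
  have hjx : (ψ ⟨x', hx'nb⟩).1.2 ≠ j₀ := by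
    intro hcon
    apply hx'
    rw [hℓeq]
    exact Set.mem_insert_of_mem w (mem_pre.mpr ⟨hx'nb, hcon⟩)
  have hseteq : ℓ ∩ {z | G.Adj x' z}
      = insert w (pre ψ ({v | v.1.2 = j₀} ∩ {v | v.1.1 = (ψ ⟨x', hx'nb⟩).1.1})) := by
    ext z
    constructor
    · rintro ⟨hzℓ, hzadj⟩
      rcases hℓeq ▸ hzℓ with rfl | hzmem
      · exact Set.mem_insert z _
      · obtain ⟨hznb, hzj⟩ := mem_pre.mp hzmem
        right
        rw [mem_pre]
        refine ⟨hznb, hzj, ?_⟩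
        have hext := (adj_transfer ψ hx'nb hznb).mp hzadj
        rcases (extAdj_iff.mp hext).2 with h | h
        · exact h.symm
        · exact absurd (h.trans (show (ψ ⟨z, hznb⟩).1.2 = j₀ from hzj)) hjx
    · intro hz
      rcases hz with rfl | hzmem
      · exact ⟨hw, hadj⟩
      · obtain ⟨hznb, hzj, hzi⟩ := mem_pre.mp hzmem
        constructor
        · rw [hℓeq]
          exact Set.mem_insert_of_mem w (mem_pre.mpr ⟨hznb, hzj⟩)
        · apply (adj_transfer ψ hx'nb hznb).mpr
          apply extAdj_iff.mpr
          refine ⟨?_, Or.inl hzi.symm⟩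
          intro hcon
          exact hjx (by rw [hcon]; exact hzj)
  rw [hseteq]
  have hwpre : w ∉ pre ψ ({v | v.1.2 = j₀} ∩ {v | v.1.1 = (ψ ⟨x', hx'nb⟩).1.1}) :=
    fun h => G.irrefl (pre_subset ψ _ h)
  rw [Set.ncard_insert_of_notMem hwpre (Set.toFinite _), ncard_pre]
  have : ({v : (Fin m × Fin n) × Fin A | v.1.2 = j₀}
      ∩ {v | v.1.1 = (ψ ⟨x', hx'nb⟩).1.1})
      = {v | v.1.1 = (ψ ⟨x', hx'nb⟩).1.1 ∧ v.1.2 = j₀} := by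
    ext v
    simp only [Set.mem_inter_iff, Set.mem_setOf_eq]
    tauto
  rw [this, ncard_classIJ]

/-- A vertex adjacent to a non-line maximal clique but not in it has exactly `A + 1`
neighbours in it. -/
lemma asm_ext_count (hmn : n < m) (hA1 : 1 ≤ A)
    (hcl : ∀ C ∈ 𝓒, G.IsClique C) (hcard : ∀ C ∈ 𝓒, C.ncard = A * m + 1)
    (huniq : ∀ x y : V, G.Adj x y → ∃! C : Set V, C ∈ 𝓒 ∧ x ∈ C ∧ y ∈ C)
    (hloc : ∀ x : V, Nonempty ((G.induce (G.neighborSet x)) ≃g cliqueExt (gridGraph m n) A))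
    {M' : Set V} (hM'max : IsMaxClique G M') (hM'𝓒 : M' ∉ 𝓒)
    {w x' : V} (hw : w ∈ M') (hx' : x' ∉ M') (hadj : G.Adj x' w) :
    (M' ∩ {z | G.Adj x' z}).ncard = A + 1 := by
  obtain ⟨ψ⟩ := hloc w
  have hnb : (G.neighborSet w).Nonempty := ⟨x', hadj.symm⟩
  obtain ⟨i₀, hMeq⟩ := asm_class hmn hA1 hcl hcard huniq hnb ψ hM'max hM'𝓒 hw
  have hx'nb : x' ∈ G.neighborSet w := hadj.symm
  have hix : (ψ ⟨x', hx'nb⟩).1.1 ≠ i₀ := by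
    intro hcon
    apply hx'
    rw [hMeq]
    exact Set.mem_insert_of_mem w (mem_pre.mpr ⟨hx'nb, hcon⟩)
  have hseteq : M' ∩ {z | G.Adj x' z}
      = insert w (pre ψ ({v | v.1.1 = i₀} ∩ {v | v.1.2 = (ψ ⟨x', hx'nb⟩).1.2})) := by
    ext z
    constructor
    · rintro ⟨hzM, hzadj⟩
      rcases hMeq ▸ hzM with rfl | hzmem
      · exact Set.mem_insert z _
      · obtain ⟨hznb, hzi⟩ := mem_pre.mp hzmem
        right
        rw [mem_pre]
        refine ⟨hznb, hzi, ?_⟩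
        have hext := (adj_transfer ψ hx'nb hznb).mp hzadj
        rcases (extAdj_iff.mp hext).2 with h | h
        · exact absurd (h.trans (show (ψ ⟨z, hznb⟩).1.1 = i₀ from hzi)) hix
        · exact h.symm
    · intro hz
      rcases hz with rfl | hzmem
      · exact ⟨hw, hadj⟩
      · obtain ⟨hznb, hzi, hzj⟩ := mem_pre.mp hzmem
        constructor
        · rw [hMeq]
          exact Set.mem_insert_of_mem w (mem_pre.mpr ⟨hznb, hzi⟩)
        · apply (adj_transfer ψ hx'nb hznb).mpr
          apply extAdj_iff.mpr
          refine ⟨?_, Or.inr hzj.symm⟩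
          intro hcon
          exact hix (by rw [hcon]; exact hzi)
  rw [hseteq]
  have hwpre : w ∉ pre ψ ({v | v.1.1 = i₀} ∩ {v | v.1.2 = (ψ ⟨x', hx'nb⟩).1.2}) :=
    fun h => G.irrefl (pre_subset ψ _ h)
  rw [Set.ncard_insert_of_notMem hwpre (Set.toFinite _), ncard_pre]
  have : ({v : (Fin m × Fin n) × Fin A | v.1.1 = i₀}
      ∩ {v | v.1.2 = (ψ ⟨x', hx'nb⟩).1.2})
      = {v | v.1.1 = i₀ ∧ v.1.2 = (ψ ⟨x', hx'nb⟩).1.2} := by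
    ext v
    simp only [Set.mem_inter_iff, Set.mem_setOf_eq]
  rw [this, ncard_classIJ]

end ExtCount
section KeyCount
set_option linter.unusedSectionVars false
set_option maxHeartbeats 2000000

lemma ncard_classIgood {m n A : ℕ} (i : Fin m) (s : Finset (Fin n)) :
    {v : (Fin m × Fin n) × Fin A | v.1.1 = i ∧ v.1.2 ∈ s}.ncard = s.card * A := by
  classical
  rw [← Nat.card_coe_set_eq]
  have e : {v : (Fin m × Fin n) × Fin A | v.1.1 = i ∧ v.1.2 ∈ s} ≃ {j // j ∈ s} × Fin A :=
    { toFun := fun v => (⟨v.1.1.2, v.2.2⟩, v.1.2)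
      invFun := fun x => ⟨((i, x.1.1), x.2), rfl, x.1.2⟩
      left_inv := by rintro ⟨⟨⟨i', j⟩, t⟩, h1, h2⟩; simp only [Set.mem_setOf_eq] at h1; subst h1; rfl
      right_inv := by rintro ⟨⟨j, hj⟩, t⟩; rfl }
  rw [Nat.card_congr e]
  simp [Nat.card_eq_fintype_card]

variable {V : Type*} [Fintype V] {G : SimpleGraph V} {m n A b : ℕ} {𝓒 : Set (Set V)}

/-- The central counting argument at a vertex `p` of an assembly `M` at distance 2 from `x`. -/
lemma key_count (hmn : n < m) (hA1 : 1 ≤ A) (hn2 : 2 ≤ n) (hmb : b + 1 ≤ m) (hnb1 : b + 1 ≤ n)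
    (hcl : ∀ C ∈ 𝓒, G.IsClique C) (hcard : ∀ C ∈ 𝓒, C.ncard = A * m + 1)
    (huniq : ∀ x y : V, G.Adj x y → ∃! C : Set V, C ∈ 𝓒 ∧ x ∈ C ∧ y ∈ C)
    (hloc : ∀ x : V, Nonempty ((G.induce (G.neighborSet x)) ≃g cliqueExt (gridGraph m n) A))
    (hconn : G.Connected)
    {x p : V} (hdist : G.dist x p = 2)
    (hc2 : {z : V | G.Adj p z ∧ G.dist x z = 1}.ncard = (b + 1) * (A + 1))
    (hb2 : {z : V | G.Adj p z ∧ G.dist x z = 3}.ncard = A * (n - (b + 1)) * (m - (b + 1)))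
    {M : Set V} (hMmax : IsMaxClique G M) (hM𝓒 : M ∉ 𝓒) (hpM : p ∈ M)
    (hxM : x ∉ M) (hMadj : ∀ y ∈ M, ¬ G.Adj x y) :
    (M ∩ {z | G.dist x z = 2}).ncard = (b + 1) * A + 1 ∧
      (∀ ℓ ∈ 𝓒, p ∈ ℓ → ∀ u ∈ ℓ, u ∈ M → u ≠ p → G.dist x u = 2 →
        (ℓ ∩ M ⊆ {z | G.dist x z = 2} ∧ (ℓ ∩ M).ncard = A + 1)) := by
  classical
  obtain ⟨ψ⟩ := hloc p
  set Γ1 : Set V := {z | G.Adj x z} with hΓ1def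
  set Γ2 : Set V := {z | G.dist x z = 2} with hΓ2def
  set Γ3 : Set V := {z | G.dist x z = 3} with hΓ3def
  set N : Set V := G.neighborSet p with hNdef
  set Ls : Fin n → Set V := fun j => pre ψ {v | v.1.2 = j} with hLsdef
  set Ks : Fin m → Set V := fun i => pre ψ {v | v.1.1 = i} with hKsdef
  have hxp : x ≠ p := by
    intro h
    rw [h, SimpleGraph.dist_self] at hdist
    omega
  have hxnotN : x ∉ N := by
    intro hxN
    have : G.dist x p = 1 := SimpleGraph.dist_eq_one_iff_adj.mpr (hxN : G.Adj p x).symm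
    omega
  have hpΓ1 : p ∉ Γ1 := by
    intro hp
    have : G.dist x p = 1 := SimpleGraph.dist_eq_one_iff_adj.mpr hp
    omega
  -- generic distance facts
  have hdist2 : ∀ z w : V, G.Adj x w → G.Adj w z → ¬ G.Adj x z → z ≠ x → G.dist x z = 2 := by
    intro z w h1 h2 h3 h4
    have hle : G.dist x z ≤ 2 := by
      have := hconn.dist_triangle (u := x) (v := w) (w := z)
      rw [SimpleGraph.dist_eq_one_iff_adj.mpr h1, SimpleGraph.dist_eq_one_iff_adj.mpr h2] at this
      omega
    have h0 : G.dist x z ≠ 0 := fun h => h4 ((hconn.dist_eq_zero_iff).mp h).symm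
    have h1' : G.dist x z ≠ 1 := fun h => h3 (SimpleGraph.dist_eq_one_iff_adj.mp h)
    omega
  have hpart : ∀ z ∈ N, G.dist x z = 1 ∨ G.dist x z = 2 ∨ G.dist x z = 3 := by
    intro z hz
    have hadj : G.Adj p z := hz
    have hle : G.dist x z ≤ 3 := by
      have := hconn.dist_triangle (u := x) (v := p) (w := z)
      rw [hdist, SimpleGraph.dist_eq_one_iff_adj.mpr hadj] at this
      omega
    have hzx : z ≠ x := by
      rintro rfl
      exact hxnotN hz
    have h0 : G.dist x z ≠ 0 := fun h => hzx ((hconn.dist_eq_zero_iff).mp h).symm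
    omega
  -- rewrite the DRG hypotheses as intersections
  have hc2' : (N ∩ Γ1).ncard = (b + 1) * (A + 1) := by
    rw [← hc2]
    congr 1
    ext z
    simp only [Set.mem_inter_iff, hNdef, SimpleGraph.mem_neighborSet, hΓ1def, Set.mem_setOf_eq]
    constructor
    · rintro ⟨h1, h2⟩
      exact ⟨h1, SimpleGraph.dist_eq_one_iff_adj.mpr h2⟩
    · rintro ⟨h1, h2⟩
      exact ⟨h1, SimpleGraph.dist_eq_one_iff_adj.mp h2⟩
  have hb2' : (N ∩ Γ3).ncard = A * (n - (b + 1)) * (m - (b + 1)) := by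
    have hseteq : N ∩ Γ3 = {z : V | G.Adj p z ∧ G.dist x z = 3} := by
      ext z
      exact ⟨fun ⟨h1, h2⟩ => ⟨h1, h2⟩, fun ⟨h1, h2⟩ => ⟨h1, h2⟩⟩
    rw [hseteq, hb2]
  -- total count
  have htotN : N.ncard = m * n * A := by
    rw [hNdef, ← pre_univ ψ, ncard_pre, Set.ncard_univ, Nat.card_eq_fintype_card]
    simp [mul_assoc]
  -- partition of N by distance
  have hNsum : (N ∩ Γ1).ncard + (N ∩ Γ2).ncard + (N ∩ Γ3).ncard = N.ncard := by
    have hd12 : Disjoint (N ∩ Γ1) (N ∩ Γ2) := by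
      rw [Set.disjoint_left]
      rintro z ⟨_, h1⟩ ⟨_, h2⟩
      rw [hΓ1def, Set.mem_setOf_eq] at h1
      rw [hΓ2def, Set.mem_setOf_eq] at h2
      rw [← SimpleGraph.dist_eq_one_iff_adj] at h1
      omega
    have hd13 : Disjoint (N ∩ Γ1) (N ∩ Γ3) := by
      rw [Set.disjoint_left]
      rintro z ⟨_, h1⟩ ⟨_, h2⟩
      rw [hΓ1def, Set.mem_setOf_eq] at h1
      rw [hΓ3def, Set.mem_setOf_eq] at h2
      rw [← SimpleGraph.dist_eq_one_iff_adj] at h1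
      omega
    have hd23 : Disjoint (N ∩ Γ2) (N ∩ Γ3) := by
      rw [Set.disjoint_left]
      rintro z ⟨_, h1⟩ ⟨_, h2⟩
      rw [hΓ2def, Set.mem_setOf_eq] at h1
      rw [hΓ3def, Set.mem_setOf_eq] at h2
      omega
    have hcover : N = (N ∩ Γ1) ∪ ((N ∩ Γ2) ∪ (N ∩ Γ3)) := by
      ext z
      constructor
      · intro hz
        rcases hpart z hz with h | h | h
        · exact Or.inl ⟨hz, SimpleGraph.dist_eq_one_iff_adj.mp h⟩
        · exact Or.inr (Or.inl ⟨hz, h⟩)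
        · exact Or.inr (Or.inr ⟨hz, h⟩)
      · rintro (⟨hz, -⟩ | ⟨hz, -⟩ | ⟨hz, -⟩) <;> exact hz
    calc (N ∩ Γ1).ncard + (N ∩ Γ2).ncard + (N ∩ Γ3).ncard
        = (N ∩ Γ1).ncard + ((N ∩ Γ2) ∪ (N ∩ Γ3)).ncard := by
          rw [Set.ncard_union_eq hd23 (Set.toFinite _) (Set.toFinite _)]
          try omega
      _ = ((N ∩ Γ1) ∪ ((N ∩ Γ2) ∪ (N ∩ Γ3))).ncard := by
          rw [Set.ncard_union_eq (Set.disjoint_union_right.mpr ⟨hd12, hd13⟩)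
            (Set.toFinite _) (Set.toFinite _)]
      _ = N.ncard := by rw [← hcover]
  -- cliques within classes
  have hLscl : ∀ j : Fin n, ∀ z ∈ Ls j, ∀ w ∈ Ls j, z ≠ w → G.Adj z w := by
    intro j z hz w hw hne
    obtain ⟨hz', hz2⟩ := mem_pre.mp hz
    obtain ⟨hw', hw2⟩ := mem_pre.mp hw
    apply (adj_transfer ψ hz' hw').mpr
    apply extAdj_iff.mpr
    refine ⟨fun h => hne (by simpa using Subtype.ext_iff.mp (ψ.toEquiv.injective h)), ?_⟩
    exact Or.inr ((show (ψ ⟨z, hz'⟩).1.2 = j from hz2).trans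
      (show (ψ ⟨w, hw'⟩).1.2 = j from hw2).symm)
  have hKscl : ∀ i : Fin m, ∀ z ∈ Ks i, ∀ w ∈ Ks i, z ≠ w → G.Adj z w := by
    intro i z hz w hw hne
    obtain ⟨hz', hz2⟩ := mem_pre.mp hz
    obtain ⟨hw', hw2⟩ := mem_pre.mp hw
    apply (adj_transfer ψ hz' hw').mpr
    apply extAdj_iff.mpr
    refine ⟨fun h => hne (by simpa using Subtype.ext_iff.mp (ψ.toEquiv.injective h)), ?_⟩
    exact Or.inl ((show (ψ ⟨z, hz'⟩).1.1 = i from hz2).trans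
      (show (ψ ⟨w, hw'⟩).1.1 = i from hw2).symm)
  -- good lines have A+1 neighbours of x
  have hgoodJcount : ∀ j : Fin n, (Ls j ∩ Γ1).Nonempty → (Ls j ∩ Γ1).ncard = A + 1 := by
    intro j ⟨w, hwLs, hwΓ1⟩
    have hadjpw : G.Adj p w := pre_subset ψ _ hwLs
    obtain ⟨ℓj, ⟨hℓj𝓒, hpℓj, hwℓj⟩, -⟩ := huniq p w hadjpw
    obtain ⟨j', hℓjeq⟩ := line_class hmn hA1 hcl hcard ψ hℓj𝓒 hpℓj
    have hj' : j' = j := by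
      have hwne : w ≠ p := fun h => G.irrefl (h ▸ hadjpw)
      have hw1 : w ∈ pre ψ {v | v.1.2 = j'} := by
        rcases hℓjeq ▸ hwℓj with h | h
        · exact absurd h hwne
        · exact h
      obtain ⟨ha1, ha2⟩ := mem_pre.mp hw1
      obtain ⟨hb1, hb2⟩ := mem_pre.mp hwLs
      exact (show (ψ ⟨w, ha1⟩).1.2 = j' from ha2).symm.trans
        (show (ψ ⟨w, hb1⟩).1.2 = j from hb2)
    rw [hj'] at hℓjeq
    have hxℓj : x ∉ ℓj := by
      rw [hℓjeq]
      rintro (rfl | hxp')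
      · exact hxp rfl
      · exact hxnotN (pre_subset ψ _ hxp')
    have hcount := line_ext_count hmn hA1 hcl hcard hloc hℓj𝓒 hwℓj hxℓj hwΓ1
    have : ℓj ∩ Γ1 = Ls j ∩ Γ1 := by
      rw [hℓjeq, Set.insert_inter_of_notMem hpΓ1]
    rw [← this]
    exact hcount
  -- good columns have A+1 neighbours of x
  have hgoodIcount : ∀ i : Fin m, (Ks i ∩ Γ1).Nonempty → (Ks i ∩ Γ1).ncard = A + 1 := by
    intro i ⟨w, hwKs, hwΓ1⟩
    obtain ⟨hMimax, hMi𝓒⟩ := class_maxclique hmn hA1 hn2 hcard ψ i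
    have hwMi : w ∈ insert p (Ks i) := Set.mem_insert_of_mem p hwKs
    have hxMi : x ∉ insert p (Ks i) := by
      rintro (rfl | hxKs)
      · exact hxp rfl
      · exact hxnotN (pre_subset ψ _ hxKs)
    have hcount := asm_ext_count hmn hA1 hcl hcard huniq hloc hMimax hMi𝓒 hwMi hxMi hwΓ1
    have : insert p (Ks i) ∩ Γ1 = Ks i ∩ Γ1 := Set.insert_inter_of_notMem hpΓ1
    rw [← this]
    exact hcount
  -- number of good lines and good columns
  set goodJ : Finset (Fin n) := Finset.univ.filter (fun j => (Ls j ∩ Γ1).Nonempty) with hgoodJdef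
  set goodI : Finset (Fin m) := Finset.univ.filter (fun i => (Ks i ∩ Γ1).Nonempty) with hgoodIdef
  have hsplitJ : ∑ j : Fin n, (Ls j ∩ Γ1).ncard = goodJ.card * (A + 1) := by
    rw [← Finset.sum_filter_add_sum_filter_not Finset.univ
      (fun j => (Ls j ∩ Γ1).Nonempty) (fun j => (Ls j ∩ Γ1).ncard)]
    have h1 : ∑ j ∈ goodJ, (Ls j ∩ Γ1).ncard = goodJ.card * (A + 1) := by
      rw [Finset.sum_congr rfl (fun j hj => hgoodJcount j (Finset.mem_filter.mp hj).2)]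
      rw [Finset.sum_const, smul_eq_mul]
    have h2 : ∑ j ∈ Finset.univ.filter (fun j => ¬ (Ls j ∩ Γ1).Nonempty),
        (Ls j ∩ Γ1).ncard = 0 := by
      apply Finset.sum_eq_zero
      intro j hj
      rw [Set.not_nonempty_iff_eq_empty.mp (Finset.mem_filter.mp hj).2]
      exact Set.ncard_empty V
    rw [h1, h2]
    omega
  have hsumJ' : ∑ j : Fin n, (Ls j ∩ Γ1).ncard = (N ∩ Γ1).ncard := sum_pre_classJ ψ Γ1
  have hJcard : goodJ.card = b + 1 := by
    have h1 : goodJ.card * (A + 1) = (b + 1) * (A + 1) := by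
      rw [← hsplitJ, hsumJ', hc2']
    exact Nat.eq_of_mul_eq_mul_right (by omega) h1
  have hsplitI : ∑ i : Fin m, (Ks i ∩ Γ1).ncard = goodI.card * (A + 1) := by
    rw [← Finset.sum_filter_add_sum_filter_not Finset.univ
      (fun i => (Ks i ∩ Γ1).Nonempty) (fun i => (Ks i ∩ Γ1).ncard)]
    have h1 : ∑ i ∈ goodI, (Ks i ∩ Γ1).ncard = goodI.card * (A + 1) := by
      rw [Finset.sum_congr rfl (fun i hi => hgoodIcount i (Finset.mem_filter.mp hi).2)]
      rw [Finset.sum_const, smul_eq_mul]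
    have h2 : ∑ i ∈ Finset.univ.filter (fun i => ¬ (Ks i ∩ Γ1).Nonempty),
        (Ks i ∩ Γ1).ncard = 0 := by
      apply Finset.sum_eq_zero
      intro i hi
      rw [Set.not_nonempty_iff_eq_empty.mp (Finset.mem_filter.mp hi).2]
      exact Set.ncard_empty V
    rw [h1, h2]
    omega
  have hsumI' : ∑ i : Fin m, (Ks i ∩ Γ1).ncard = (N ∩ Γ1).ncard := sum_pre_classI ψ Γ1
  have hIcard : goodI.card = b + 1 := by
    have h1 : goodI.card * (A + 1) = (b + 1) * (A + 1) := by
      rw [← hsplitI, hsumI', hc2']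
    exact Nat.eq_of_mul_eq_mul_right (by omega) h1
  -- each class has n*A elements, each (row ∩ column) has A elements
  have hKscard : ∀ i : Fin m, (Ks i).ncard = n * A := by
    intro i
    rw [hKsdef]
    rw [ncard_pre, ncard_classI]
  have hLKcard : ∀ (j : Fin n) (i : Fin m), (Ls j ∩ Ks i).ncard = A := by
    intro j i
    have : Ls j ∩ Ks i = pre ψ ({v | v.1.2 = j} ∩ {v | v.1.1 = i}) := by
      rw [pre_inter]
    rw [this, ncard_pre]
    have : ({v : (Fin m × Fin n) × Fin A | v.1.2 = j} ∩ {v | v.1.1 = i})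
        = {v | v.1.1 = i ∧ v.1.2 = j} := by
      ext v
      simp only [Set.mem_inter_iff, Set.mem_setOf_eq]
      tauto
    rw [this, ncard_classIJ]
  -- good columns split exactly
  have hgoodI2 : ∀ i ∈ goodI, (Ks i ∩ Γ2).ncard + (A + 1) = n * A := by
    intro i hi
    have hne : (Ks i ∩ Γ1).Nonempty := (Finset.mem_filter.mp hi).2
    obtain ⟨w, hwKs, hwΓ1⟩ := hne
    have hcover : Ks i = (Ks i ∩ Γ1) ∪ (Ks i ∩ Γ2) := by
      ext z
      constructor
      · intro hz
        by_cases hzΓ1 : z ∈ Γ1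
        · exact Or.inl ⟨hz, hzΓ1⟩
        · refine Or.inr ⟨hz, ?_⟩
          have hzw : z ≠ w := fun h => hzΓ1 (h ▸ hwΓ1)
          have hzx : z ≠ x := by
            rintro rfl
            exact hxnotN (pre_subset ψ _ hz)
          exact hdist2 z w hwΓ1 (hKscl i w hwKs z hz (Ne.symm hzw)) hzΓ1 hzx
      · rintro (⟨hz, -⟩ | ⟨hz, -⟩) <;> exact hz
    have hdisj : Disjoint (Ks i ∩ Γ1) (Ks i ∩ Γ2) := by
      rw [Set.disjoint_left]
      rintro z ⟨-, h1⟩ ⟨-, h2⟩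
      rw [hΓ1def, Set.mem_setOf_eq, ← SimpleGraph.dist_eq_one_iff_adj] at h1
      rw [hΓ2def, Set.mem_setOf_eq] at h2
      omega
    have := hKscard i
    rw [hcover, Set.ncard_union_eq hdisj (Set.toFinite _) (Set.toFinite _),
      hgoodIcount i ⟨w, hwKs, hwΓ1⟩] at this
    omega
  -- bad columns contain the union of the good-line traces
  set Vi : Fin m → Set V := fun i => pre ψ {v | v.1.1 = i ∧ v.1.2 ∈ goodJ} with hVidef
  have hVicard : ∀ i : Fin m, (Vi i).ncard = (b + 1) * A := by
    intro i
    rw [hVidef]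
    rw [ncard_pre, ncard_classIgood, hJcard]
  have hVisub : ∀ i : Fin m, i ∉ goodI → Vi i ⊆ Ks i ∩ Γ2 := by
    intro i hi z hz
    obtain ⟨hznb, hzi, hzj⟩ := mem_pre.mp hz
    have hzKs : z ∈ Ks i := mem_pre.mpr ⟨hznb, hzi⟩
    have hzLs : z ∈ Ls ((ψ ⟨z, hznb⟩).1.2) := mem_pre.mpr ⟨hznb, rfl⟩
    have hjgood : (ψ ⟨z, hznb⟩).1.2 ∈ goodJ := hzj
    obtain ⟨w, hwLs, hwΓ1⟩ := (Finset.mem_filter.mp hjgood).2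
    have hzΓ1 : z ∉ Γ1 := by
      intro hcon
      exact hi (Finset.mem_filter.mpr ⟨Finset.mem_univ i, ⟨z, hzKs, hcon⟩⟩)
    have hzw : z ≠ w := fun h => hzΓ1 (h ▸ hwΓ1)
    have hzx : z ≠ x := by
      rintro rfl
      exact hxnotN hznb
    exact ⟨hzKs, hdist2 z w hwΓ1
      (hLscl _ w hwLs z hzLs (Ne.symm hzw)) hzΓ1 hzx⟩
  have hbadge : ∀ i : Fin m, i ∉ goodI → (b + 1) * A ≤ (Ks i ∩ Γ2).ncard := by
    intro i hi
    rw [← hVicard i]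
    exact Set.ncard_le_ncard (hVisub i hi) (Set.toFinite _)
  -- summation over all columns of the Γ2-traces
  have hsumI2 : ∑ i : Fin m, (Ks i ∩ Γ2).ncard = (N ∩ Γ2).ncard := sum_pre_classI ψ Γ2
  set badI : Finset (Fin m) := Finset.univ.filter (fun i => ¬ (Ks i ∩ Γ1).Nonempty)
    with hbadIdef
  have hbadIcard : goodI.card + badI.card = m := by
    rw [hgoodIdef, hbadIdef]
    rw [Finset.card_filter_add_card_filter_not]
    simp
  have hmembad : ∀ i : Fin m, i ∈ badI ↔ i ∉ goodI := by
    intro i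
    rw [hgoodIdef, hbadIdef]
    simp
  have hsplitI2 : ∑ i : Fin m, (Ks i ∩ Γ2).ncard
      = (b + 1) * (n * A - (A + 1)) + ∑ i ∈ badI, (Ks i ∩ Γ2).ncard := by
    rw [← Finset.sum_filter_add_sum_filter_not Finset.univ
      (fun i => (Ks i ∩ Γ1).Nonempty) (fun i => (Ks i ∩ Γ2).ncard)]
    congr 1
    have h1 : ∀ i ∈ goodI, (Ks i ∩ Γ2).ncard = n * A - (A + 1) := by
      intro i hi
      have := hgoodI2 i hi
      omega
    rw [Finset.sum_congr rfl h1, Finset.sum_const, smul_eq_mul, hIcard]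
  -- the crucial arithmetic identity
  have hNA : A + 1 ≤ n * A := by nlinarith
  have hbadIval : badI.card = m - (b + 1) := by omega
  have hbadsum : ∑ i ∈ badI, (Ks i ∩ Γ2).ncard = badI.card * ((b + 1) * A) := by
    set c1 := (N ∩ Γ1).ncard
    set c2 := (N ∩ Γ2).ncard
    set c3 := (N ∩ Γ3).ncard
    set S := ∑ i ∈ badI, (Ks i ∩ Γ2).ncard
    have e1 : (c1 : ℤ) + c2 + c3 = (m : ℤ) * n * A := by
      have h := hNsum
      rw [htotN] at h
      exact_mod_cast h
    have e2 : (c1 : ℤ) = ((b : ℤ) + 1) * ((A : ℤ) + 1) := by exact_mod_cast hc2'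
    have e3 : (c3 : ℤ) = (A : ℤ) * ((n : ℤ) - ((b : ℤ) + 1)) * ((m : ℤ) - ((b : ℤ) + 1)) := by
      rw [hb2']
      push_cast [Nat.cast_sub hnb1, Nat.cast_sub hmb]
      ring
    have e4 : (c2 : ℤ) = ((b : ℤ) + 1) * ((n : ℤ) * A - ((A : ℤ) + 1)) + (S : ℤ) := by
      have h := hsplitI2
      rw [hsumI2] at h
      rw [h]
      push_cast [Nat.cast_sub hNA]
      ring
    have e5 : (badI.card : ℤ) = (m : ℤ) - ((b : ℤ) + 1) := by
      rw [hbadIval]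
      push_cast [Nat.cast_sub hmb]
      ring
    have goalZ : (S : ℤ) = (badI.card : ℤ) * (((b : ℤ) + 1) * A) := by
      rw [e5]
      linear_combination e1 - e2 - e3 - e4
    exact_mod_cast goalZ
  have hbadeq : ∀ i ∈ badI, (Ks i ∩ Γ2).ncard = (b + 1) * A := by
    apply eq_of_sum_eq_card_mul _ hbadsum
    intro i hi
    exact hbadge i ((hmembad i).mp hi)
  have hKsΓ2eq : ∀ i ∈ badI, Ks i ∩ Γ2 = Vi i := by
    intro i hi
    refine (Set.eq_of_subset_of_ncard_le (hVisub i ((hmembad i).mp hi)) ?_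
      (Set.toFinite _)).symm
    rw [hVicard i, hbadeq i hi]
  -- now specialize to the assembly M
  have hnbp : (G.neighborSet p).Nonempty := by
    have hpos : (N ∩ Γ1).ncard ≠ 0 := by
      rw [hc2']
      positivity
    obtain ⟨z, hz⟩ := Set.nonempty_of_ncard_ne_zero hpos
    exact ⟨z, hz.1⟩
  obtain ⟨i₀, hMeq⟩ := asm_class hmn hA1 hcl hcard huniq hnbp ψ hMmax hM𝓒 hpM
  have hi₀bad : i₀ ∈ badI := by
    rw [hmembad]
    intro hgood
    obtain ⟨z, hzK, hzΓ1⟩ := (Finset.mem_filter.mp hgood).2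
    exact hMadj z (hMeq ▸ Set.mem_insert_of_mem p hzK) hzΓ1
  have hpΓ2 : p ∈ Γ2 := hdist
  have hpKs : p ∉ Ks i₀ := fun h => G.irrefl (pre_subset ψ _ h)
  have hMΓ2 : M ∩ Γ2 = insert p (Ks i₀ ∩ Γ2) := by
    rw [hMeq]
    ext z
    constructor
    · rintro ⟨hz1, hz2⟩
      rcases hz1 with rfl | hz1
      · exact Set.mem_insert _ _
      · exact Set.mem_insert_of_mem _ ⟨hz1, hz2⟩
    · rintro (rfl | ⟨hz1, hz2⟩)
      · exact ⟨Set.mem_insert _ _, hpΓ2⟩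
      · exact ⟨Set.mem_insert_of_mem _ hz1, hz2⟩
  have hcount1 : (M ∩ Γ2).ncard = (b + 1) * A + 1 := by
    rw [hMΓ2, Set.ncard_insert_of_notMem (fun h => hpKs h.1) (Set.toFinite _),
      hbadeq i₀ hi₀bad]
  refine ⟨hcount1, ?_⟩
  intro ℓ hℓ𝓒 hpℓ u huℓ huM hup hu2
  obtain ⟨j₁, hℓeq⟩ := line_class hmn hA1 hcl hcard ψ hℓ𝓒 hpℓ
  have huLs : u ∈ Ls j₁ := by
    rcases hℓeq ▸ huℓ with h | h
    · exact absurd h hup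
    · exact h
  have huKs : u ∈ Ks i₀ := by
    rcases hMeq ▸ huM with h | h
    · exact absurd h hup
    · exact h
  have huVi : u ∈ Vi i₀ := by
    rw [← hKsΓ2eq i₀ hi₀bad]
    exact ⟨huKs, hu2⟩
  obtain ⟨hunb, hui, huj⟩ := mem_pre.mp huVi
  have hj₁ : (ψ ⟨u, hunb⟩).1.2 = j₁ := by
    obtain ⟨h1, h2⟩ := mem_pre.mp huLs
    exact h2
  have hj₁good : j₁ ∈ goodJ := hj₁ ▸ huj
  obtain ⟨w, hwLs, hwΓ1⟩ := (Finset.mem_filter.mp hj₁good).2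
  constructor
  · rintro v ⟨hvℓ, hvM⟩
    by_cases hvp : v = p
    · exact hvp ▸ hpΓ2
    · have hvLs : v ∈ Ls j₁ := by
        rcases hℓeq ▸ hvℓ with h | h
        · exact absurd h hvp
        · exact h
      have hvΓ1 : ¬ G.Adj x v := hMadj v hvM
      have hvw : v ≠ w := fun h => hvΓ1 (h ▸ hwΓ1)
      have hvx : v ≠ x := fun h => hxM (h ▸ hvM)
      exact hdist2 v w hwΓ1 (hLscl j₁ w hwLs v hvLs (Ne.symm hvw)) hvΓ1 hvx
  · have hseteq : ℓ ∩ M = insert p (Ls j₁ ∩ Ks i₀) := by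
      rw [hℓeq, hMeq]
      ext z
      constructor
      · rintro ⟨hz1, hz2⟩
        rcases hz1 with rfl | hz1
        · exact Set.mem_insert _ _
        · rcases hz2 with rfl | hz2
          · exact Set.mem_insert _ _
          · exact Set.mem_insert_of_mem _ ⟨hz1, hz2⟩
      · rintro (rfl | ⟨hz1, hz2⟩)
        · exact ⟨Set.mem_insert _ _, Set.mem_insert _ _⟩
        · exact ⟨Set.mem_insert_of_mem _ hz1, Set.mem_insert_of_mem _ hz2⟩
    have hpnot : p ∉ Ls j₁ ∩ Ks i₀ := fun h => hpKs h.2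
    rw [hseteq, Set.ncard_insert_of_notMem hpnot (Set.toFinite _), hLKcard j₁ i₀]

end KeyCount
set_option maxHeartbeats 3000000

/-- for a geometric distance-regular graph with classical parameters
`(D, b, α, β)`, `b ≥ 2`, `1 ≤ α ≤ b - 1`, `D ≥ 3`, line set `𝓒` and `r = [D]`, whose local
graphs are all the `α`-clique extension of the `(β/α) × r` grid, and with `β > αr`: for an
assembly `M` and a vertex `x` at distance 2 from `M`, with `B = Γ₂(x) ∩ M` and
`L(B) = {ℓ ∩ B : ℓ ∈ 𝓒, |ℓ ∩ B| ≥ 2}`, the pair `(B, L(B))` is a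
2-(α(b+1)+1, α+1, 1) design; in particular `α + 1` divides `b(b+1)`. -/
theorem statement_19 {V : Type*} [Fintype V] (G : SimpleGraph V) (D b : ℕ) (α β : ℝ)
    (cc aa bb : ℕ → ℕ) (hb : 2 ≤ b) (hD : 3 ≤ D)
    (hα : 1 ≤ α ∧ α ≤ (b : ℝ) - 1)
    (h : HasClassicalParams G D b α β cc aa bb)
    (𝓒 : Set (Set V)) (hgeo : IsGeomLineSet G (β + 1) 𝓒)
    (A m n : ℕ) (hA : (A : ℝ) = α) (hm : (m : ℝ) = β / α) (hn : (n : ℝ) = gauss b D)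
    (hloc : ∀ x : V, Nonempty ((G.induce (G.neighborSet x)) ≃g cliqueExt (gridGraph m n) A))
    (hβα : α * gauss b D < β)
    (M : Set V) (hM : IsAssembly G 𝓒 M) (x : V) (hx : distToSet G x M = 2)
    (B : Set V) (hB : B = {y ∈ M | G.dist x y = 2})
    (LB : Set (Set V)) (hLB : LB = {t : Set V | ∃ ℓ ∈ 𝓒, 2 ≤ (ℓ ∩ B).ncard ∧ t = ℓ ∩ B}) :
    ((B.ncard : ℝ) = α * ((b : ℝ) + 1) + 1) ∧
    (∀ t ∈ LB, (t.ncard : ℝ) = α + 1) ∧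
    (∀ p ∈ B, ∀ q ∈ B, p ≠ q → ∃! t : Set V, t ∈ LB ∧ p ∈ t ∧ q ∈ t) ∧
    (A + 1) ∣ b * (b + 1) := by
  classical
  obtain ⟨hdrg, hbbs, hccs⟩ := h
  obtain ⟨hconn, hdiam, hdiamex, hdrg4⟩ := hdrg
  obtain ⟨hgeo1, huniq⟩ := hgeo
  have hcl : ∀ C ∈ 𝓒, G.IsClique C := fun C hC => (hgeo1 C hC).1
  -- numeric facts
  have hα1 : (1 : ℝ) ≤ α := hα.1
  have hαpos : (0 : ℝ) < α := lt_of_lt_of_le one_pos hα.1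
  have hA1 : 1 ≤ A := by
    have h1 : (1 : ℝ) ≤ (A : ℝ) := by rw [hA]; exact hα.1
    exact_mod_cast h1
  have hβ : β = (A : ℝ) * m := by
    rw [hA]
    field_simp at hm
    linarith
  have hgauss3 : (1 : ℝ) + b + b ^ 2 ≤ gauss b D := by
    have hsub : Finset.range 3 ⊆ Finset.range D := Finset.range_subset_range.mpr hD
    have h1 : ∑ i ∈ Finset.range 3, (b : ℝ) ^ i ≤ ∑ i ∈ Finset.range D, (b : ℝ) ^ i :=
      Finset.sum_le_sum_of_subset_of_nonneg hsub (fun i _ _ => by positivity)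
    have h2 : ∑ i ∈ Finset.range 3, (b : ℝ) ^ i = 1 + b + b ^ 2 := by
      simp [Finset.sum_range_succ]
    rw [← h2]
    exact h1
  have hn_ge : 1 + b + b ^ 2 ≤ n := by
    have h1 : ((1 + b + b ^ 2 : ℕ) : ℝ) ≤ (n : ℝ) := by
      rw [hn]
      push_cast
      exact hgauss3
    exact_mod_cast h1
  have hnb1 : b + 1 ≤ n := by
    have : 0 ≤ b ^ 2 := Nat.zero_le _
    omega
  have hn2 : 2 ≤ n := by omega
  have hmn : n < m := by
    have h1 : (n : ℝ) < (m : ℝ) := by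
      rw [hm, hn]
      rw [lt_div_iff₀ hαpos]
      calc gauss b D * α = α * gauss b D := by ring
        _ < β := hβα
    exact_mod_cast h1
  have hmb : b + 1 ≤ m := by omega
  have hA0 : 0 < A := hA1
  have hcard𝓒 : ∀ C ∈ 𝓒, C.ncard = A * m + 1 := by
    intro C hC
    have h1 : (C.ncard : ℝ) = ((A * m + 1 : ℕ) : ℝ) := by
      rw [(hgeo1 C hC).2, hβ]
      push_cast
      ring
    exact_mod_cast h1
  have hD2 : (2 : ℕ) ≤ D := by omega
  have hg2 : gauss b 2 = 1 + (b : ℝ) := by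
    simp [gauss, Finset.sum_range_succ]
  have hg1 : gauss b 1 = 1 := by simp [gauss]
  have hcc2 : cc 2 = (b + 1) * (A + 1) := by
    have h1 := hccs 2 (by omega) hD2
    rw [hg2, show (2 : ℕ) - 1 = 1 from rfl, hg1, ← hA] at h1
    have h2 : ((( b + 1) * (A + 1) : ℕ) : ℝ) = (1 + (b : ℝ)) * (1 + (A : ℝ) * 1) := by
      push_cast
      ring
    exact_mod_cast h1.trans h2.symm
  have hbb2 : bb 2 = A * (n - (b + 1)) * (m - (b + 1)) := by
    have h1 := hbbs 2 (by omega)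
    rw [hg2, ← hn, hβ, ← hA] at h1
    have h2 : ((A * (n - (b + 1)) * (m - (b + 1)) : ℕ) : ℝ)
        = ((n : ℝ) - (1 + (b : ℝ))) * ((A : ℝ) * m - (A : ℝ) * (1 + (b : ℝ))) := by
      push_cast [Nat.cast_sub hnb1, Nat.cast_sub hmb]
      ring
    exact_mod_cast h1.trans h2.symm
  -- distance facts about the assembly M
  have himg : (G.dist x '' M).Nonempty := by
    by_contra hcon
    rw [Set.not_nonempty_iff_eq_empty] at hcon
    unfold distToSet at hx
    rw [hcon, Nat.sInf_empty] at hx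
    omega
  have hmem2 : (2 : ℕ) ∈ G.dist x '' M := by
    unfold distToSet at hx
    rw [← hx]
    exact Nat.sInf_mem himg
  obtain ⟨p₀, hp₀M, hp₀d⟩ := hmem2
  have hlb : ∀ y ∈ M, 2 ≤ G.dist x y := by
    intro y hy
    unfold distToSet at hx
    rw [← hx]
    exact Nat.sInf_le ⟨y, hy, rfl⟩
  have hxM : x ∉ M := by
    intro hxm
    have := hlb x hxm
    rw [SimpleGraph.dist_self] at this
    omega
  have hMadj : ∀ y ∈ M, ¬ G.Adj x y := by
    intro y hy hadj
    have h1 := hlb y hy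
    rw [SimpleGraph.dist_eq_one_iff_adj.mpr hadj] at h1
    omega
  -- the master counting fact
  have hkey : ∀ p ∈ M, G.dist x p = 2 →
      (M ∩ {z | G.dist x z = 2}).ncard = (b + 1) * A + 1 ∧
      (∀ ℓ ∈ 𝓒, p ∈ ℓ → ∀ u ∈ ℓ, u ∈ M → u ≠ p → G.dist x u = 2 →
        (ℓ ∩ M ⊆ {z | G.dist x z = 2} ∧ (ℓ ∩ M).ncard = A + 1)) := by
    intro p hpM hp2
    have hd := hdrg4 2 hD2 x p hp2
    have hd1 : {z : V | G.Adj p z ∧ G.dist x z = 1}.ncard = (b + 1) * (A + 1) := by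
      have h1 := hd.1
      norm_num at h1
      have hset : {z : V | G.Adj p z ∧ G.dist x z = 1} = {z | G.Adj p z ∧ G.Adj x z} := by
        ext z
        simp [SimpleGraph.dist_eq_one_iff_adj]
      rw [hset, h1, hcc2]
    have hd3 : {z : V | G.Adj p z ∧ G.dist x z = 3}.ncard
        = A * (n - (b + 1)) * (m - (b + 1)) := by
      have h3 := hd.2.2
      norm_num at h3
      rw [h3, hbb2]
    exact key_count hmn hA1 hn2 hmb hnb1 hcl hcard𝓒 huniq hloc hconn hp2 hd1 hd3
      hM.1 hM.2 hpM hxM hMadj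
  have hBeq : B = M ∩ {z | G.dist x z = 2} := by
    rw [hB]
    ext z
    exact ⟨fun ⟨h1, h2⟩ => ⟨h1, h2⟩, fun ⟨h1, h2⟩ => ⟨h1, h2⟩⟩
  have hkey₀ := hkey p₀ hp₀M hp₀d
  have hBcard : B.ncard = (b + 1) * A + 1 := by rw [hBeq]; exact hkey₀.1
  have concl1 : (B.ncard : ℝ) = α * ((b : ℝ) + 1) + 1 := by
    rw [hBcard, ← hA]
    push_cast
    ring
  -- every block has A + 1 points
  have concl2 : ∀ t ∈ LB, t.ncard = A + 1 := by
    intro t ht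
    rw [hLB] at ht
    obtain ⟨ℓ, hℓ𝓒, hℓ2, rfl⟩ := ht
    obtain ⟨pp, hpp, uu, huu, hne⟩ :=
      (Set.one_lt_ncard (s := ℓ ∩ B) (Set.toFinite _)).mp (by omega)
    have hppB : pp ∈ B := hpp.2
    have hppM : pp ∈ M := (hBeq ▸ hppB).1
    have hpp2 : G.dist x pp = 2 := (hBeq ▸ hppB).2
    have huuB : uu ∈ B := huu.2
    have huuM : uu ∈ M := (hBeq ▸ huuB).1
    have huu2 : G.dist x uu = 2 := (hBeq ▸ huuB).2
    have hk := (hkey pp hppM hpp2).2 ℓ hℓ𝓒 hpp.1 uu huu.1 huuM (Ne.symm hne) huu2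
    have hBM : ℓ ∩ B = ℓ ∩ M := by
      rw [hBeq]
      ext z
      constructor
      · rintro ⟨h1, h2, -⟩
        exact ⟨h1, h2⟩
      · rintro ⟨h1, h2⟩
        exact ⟨h1, h2, hk.1 ⟨h1, h2⟩⟩
    rw [hBM]
    exact hk.2
  have concl2' : ∀ t ∈ LB, (t.ncard : ℝ) = α + 1 := by
    intro t ht
    rw [concl2 t ht, ← hA]
    push_cast
    ring
  -- the 2-design property
  have hMclique := hM.1.1
  have concl3 : ∀ p ∈ B, ∀ q ∈ B, p ≠ q → ∃! t : Set V, t ∈ LB ∧ p ∈ t ∧ q ∈ t := by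
    intro p hp q hq hpq
    have hpM : p ∈ M := (hBeq ▸ hp).1
    have hqM : q ∈ M := (hBeq ▸ hq).1
    have hadj : G.Adj p q := hMclique hpM hqM hpq
    obtain ⟨ℓ, ⟨hℓ𝓒, hpℓ, hqℓ⟩, hℓuniq⟩ := huniq p q hadj
    have h2le : 2 ≤ (ℓ ∩ B).ncard := by
      have hsub : ({p, q} : Set V) ⊆ ℓ ∩ B := by
        rintro z (rfl | rfl)
        · exact ⟨hpℓ, hp⟩
        · exact ⟨hqℓ, hq⟩
      calc 2 = ({p, q} : Set V).ncard := (Set.ncard_pair hpq).symm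
        _ ≤ (ℓ ∩ B).ncard := Set.ncard_le_ncard hsub (Set.toFinite _)
    refine ⟨ℓ ∩ B, ⟨?_, ⟨hpℓ, hp⟩, ⟨hqℓ, hq⟩⟩, ?_⟩
    · rw [hLB]
      exact ⟨ℓ, hℓ𝓒, h2le, rfl⟩
    · rintro t ⟨htLB, hpt, hqt⟩
      have htLB' := htLB
      rw [hLB] at htLB'
      obtain ⟨ℓ', hℓ'𝓒, -, rfl⟩ := htLB'
      have : ℓ' = ℓ := hℓuniq ℓ' ⟨hℓ'𝓒, hpt.1, hqt.1⟩
      rw [this]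
  refine ⟨concl1, concl2', concl3, ?_⟩
  -- divisibility by double counting
  have hblocksub : ∀ t ∈ LB, t ⊆ B := by
    intro t ht
    rw [hLB] at ht
    obtain ⟨ℓ, -, -, rfl⟩ := ht
    exact Set.inter_subset_right
  -- replication number
  have hrep : ∀ p ∈ B, {t ∈ LB | p ∈ t}.ncard = b + 1 := by
    intro p hp
    set F : V → Set V := fun q =>
      if h : ∃ t, t ∈ LB ∧ p ∈ t ∧ q ∈ t then h.choose else ∅ with hFdef
    have hF : ∀ q ∈ B, q ≠ p → F q ∈ LB ∧ p ∈ F q ∧ q ∈ F q := by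
      intro q hq hqp
      have hex : ∃ t, t ∈ LB ∧ p ∈ t ∧ q ∈ t := (concl3 p hp q hq (Ne.symm hqp)).exists
      rw [hFdef]
      simp only [dif_pos hex]
      exact hex.choose_spec
    set s : Finset V := (Set.toFinite (B \ {p})).toFinset with hsdef
    set T : Finset (Set V) := (Set.toFinite {t ∈ LB | p ∈ t}).toFinset with hTdef
    have hmaps : ∀ q ∈ s, F q ∈ T := by
      intro q hq
      rw [hsdef, Set.Finite.mem_toFinset] at hq
      obtain ⟨hF1, hF2, -⟩ := hF q hq.1 hq.2
      rw [hTdef, Set.Finite.mem_toFinset]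
      exact ⟨hF1, hF2⟩
    have hcount := Finset.card_eq_sum_card_fiberwise hmaps
    have hfiber : ∀ t ∈ T, (s.filter (fun q => F q = t)).card = A := by
      intro t ht
      rw [hTdef, Set.Finite.mem_toFinset] at ht
      have hseq : (s.filter (fun q => F q = t)) = (Set.toFinite (t \ {p})).toFinset := by
        ext q
        rw [Finset.mem_filter, hsdef, Set.Finite.mem_toFinset, Set.Finite.mem_toFinset]
        constructor
        · rintro ⟨⟨hqB, hqp⟩, hFq⟩
          obtain ⟨-, -, hqF⟩ := hF q hqB hqp
          exact ⟨hFq ▸ hqF, hqp⟩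
        · rintro ⟨hqt, hqp⟩
          have hqB : q ∈ B := hblocksub t ht.1 hqt
          have hqp' : q ≠ p := fun hcon => hqp (hcon ▸ rfl)
          obtain ⟨hF1, hF2, hF3⟩ := hF q hqB hqp'
          refine ⟨⟨hqB, hqp'⟩, ?_⟩
          exact (concl3 p hp q hqB (Ne.symm hqp')).unique ⟨hF1, hF2, hF3⟩ ⟨ht.1, ht.2, hqt⟩
      rw [hseq, ← Set.ncard_eq_toFinset_card (t \ {p}) (Set.toFinite _),
        Set.ncard_diff_singleton_of_mem ht.2, concl2 t ht.1]
      omega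
    have hscard : s.card = (b + 1) * A := by
      rw [hsdef, ← Set.ncard_eq_toFinset_card (B \ {p}) (Set.toFinite _),
        Set.ncard_diff_singleton_of_mem hp, hBcard]
      omega
    rw [hscard, Finset.sum_congr rfl hfiber, Finset.sum_const, smul_eq_mul] at hcount
    have hTcard : T.card = b + 1 := by
      have := hcount
      have hA0' : 0 < A := hA0
      nlinarith
    rw [← hTcard, hTdef, Set.ncard_eq_toFinset_card _ (Set.toFinite _)]
  -- incidence double count
  set fB : Finset V := (Set.toFinite B).toFinset with hfBdef
  set fLB : Finset (Set V) := (Set.toFinite LB).toFinset with hfLBdef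
  set I : Finset (V × Set V) :=
    fB.biUnion (fun p => ((Set.toFinite {t ∈ LB | p ∈ t}).toFinset).image
      (fun t => (p, t))) with hIdef
  have hI1 : I.card = ((b + 1) * A + 1) * (b + 1) := by
    rw [hIdef, Finset.card_biUnion]
    · have h1 : ∀ p ∈ fB, (((Set.toFinite {t ∈ LB | p ∈ t}).toFinset).image
          (fun t => (p, t))).card = b + 1 := by
        intro p hp
        rw [Finset.card_image_of_injective _
            (fun a b hab => by simpa using congrArg Prod.snd hab),
          ← Set.ncard_eq_toFinset_card _ (Set.toFinite _)]
        exact hrep p ((Set.Finite.mem_toFinset _).mp hp)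
      rw [Finset.sum_congr rfl h1, Finset.sum_const, smul_eq_mul]
      congr 1
      rw [hfBdef, ← Set.ncard_eq_toFinset_card _ (Set.toFinite _), hBcard]
    · intro p hp q hq hpq
      rw [Function.onFun, Finset.disjoint_left]
      rintro ⟨a, t⟩ ha hb
      obtain ⟨t1, -, ht1⟩ := Finset.mem_image.mp ha
      obtain ⟨t2, -, ht2⟩ := Finset.mem_image.mp hb
      exact hpq ((congrArg Prod.fst ht1).trans (congrArg Prod.fst ht2).symm)
  have hI2 : I.card = fLB.card * (A + 1) := by
    have hIJ : I = fLB.biUnion (fun t => ((Set.toFinite t).toFinset).image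
        (fun q => (q, t))) := by
      ext qt
      obtain ⟨q, t⟩ := qt
      rw [hIdef, Finset.mem_biUnion, Finset.mem_biUnion]
      constructor
      · rintro ⟨p, hp, hmem⟩
        obtain ⟨t', ht', heq⟩ := Finset.mem_image.mp hmem
        have he1 : p = q := congrArg Prod.fst heq
        have he2 : t' = t := congrArg Prod.snd heq
        subst he1
        subst he2
        rw [Set.Finite.mem_toFinset] at ht'
        refine ⟨t', (Set.Finite.mem_toFinset _).mpr ht'.1, ?_⟩
        apply Finset.mem_image.mpr
        exact ⟨p, (Set.Finite.mem_toFinset _).mpr ht'.2, rfl⟩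
      · rintro ⟨t', ht', hmem⟩
        obtain ⟨q', hq', heq⟩ := Finset.mem_image.mp hmem
        have he1 : q' = q := congrArg Prod.fst heq
        have he2 : t' = t := congrArg Prod.snd heq
        subst he1
        subst he2
        rw [Set.Finite.mem_toFinset] at ht' hq'
        have hqB : q' ∈ B := hblocksub t' ht' hq'
        refine ⟨q', (Set.Finite.mem_toFinset _).mpr hqB, ?_⟩
        apply Finset.mem_image.mpr
        refine ⟨t', (Set.Finite.mem_toFinset _).mpr ⟨ht', hq'⟩, rfl⟩
    rw [hIJ, Finset.card_biUnion]
    · have h1 : ∀ t ∈ fLB, (((Set.toFinite t).toFinset).image (fun q => (q, t))).card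
          = A + 1 := by
        intro t ht
        rw [Finset.card_image_of_injective _
            (fun a b hab => by simpa using congrArg Prod.fst hab),
          ← Set.ncard_eq_toFinset_card _ (Set.toFinite _)]
        exact concl2 t ((Set.Finite.mem_toFinset _).mp ht)
      rw [Finset.sum_congr rfl h1, Finset.sum_const, smul_eq_mul]
    · intro t1 ht1 t2 ht2 hne
      rw [Function.onFun, Finset.disjoint_left]
      rintro ⟨a, t⟩ ha hb
      obtain ⟨q1, -, hq1⟩ := Finset.mem_image.mp ha
      obtain ⟨q2, -, hq2⟩ := Finset.mem_image.mp hb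
      exact hne ((congrArg Prod.snd hq1).trans (congrArg Prod.snd hq2).symm)
  have hfin : fLB.card * (A + 1) = ((b + 1) * A + 1) * (b + 1) := by
    rw [← hI2, hI1]
  -- conclude divisibility
  have hz : ((b : ℤ) * ((b : ℤ) + 1)) = ((A : ℤ) + 1) * (((b : ℤ) + 1) ^ 2 - fLB.card) := by
    have hfinZ : (fLB.card : ℤ) * ((A : ℤ) + 1)
        = (((b : ℤ) + 1) * A + 1) * ((b : ℤ) + 1) := by exact_mod_cast hfin
    linear_combination hfinZ
  have hdvdZ : ((A : ℤ) + 1) ∣ ((b : ℤ) * ((b : ℤ) + 1)) :=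
    ⟨((b : ℤ) + 1) ^ 2 - fLB.card, hz⟩
  have hdvdN : ((A + 1 : ℕ) : ℤ) ∣ ((b * (b + 1) : ℕ) : ℤ) := by
    push_cast
    exact hdvdZ
  exact_mod_cast hdvdN


end DRGPaper
end
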